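/- arXiv:2204.00230 — 6 statements merged into one kernel-verified Lean document; each statement's English description precedes it below -/
import Mathlib

section
/- Let n ≥ 1, let v_1, …, v_n be algebraic numbers that are linearly independent over ℚ, and let f ∈ ℂ[X, Y_1, …, Y_n] be a nonzero polynomial all of whose coefficients are algebraic numbers. Then the function F : ℝ → ℂ defined by F(x) = f(x, e^{v_1 x}, …, e^{v_n x}) is not identically zero; in fact, there exists a nonzero rational number x_0 with F(x_0) ≠ 0. -/
open Polynomial Complex Finset

private lemma step_deriv {ι : Type*} (t : Finset ι) (e : ι → ℂ) (p : ι → ℂ[X])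
    (h : ∀ z : ℂ, ∑ i ∈ t, (p i).eval z * Complex.exp (e i * z) = 0) (z : ℂ) :
    ∑ i ∈ t, ((p i).derivative + C (e i) * p i).eval z * Complex.exp (e i * z) = 0 := by
  have hterm : ∀ i ∈ t, HasDerivAt (fun w => (p i).eval w * Complex.exp (e i * w))
      (((p i).derivative + C (e i) * p i).eval z * Complex.exp (e i * z)) z := by
    intro i _
    have h1 : HasDerivAt (fun w => (p i).eval w) ((p i).derivative.eval z) z :=
      (p i).hasDerivAt z
    have h2 : HasDerivAt (fun w : ℂ => Complex.exp (e i * w)) (Complex.exp (e i * z) * e i) z := by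
      have hlin : HasDerivAt (fun w : ℂ => e i * w) (e i) z := by
        simpa using (hasDerivAt_id z).const_mul (e i)
      simpa using hlin.cexp
    have h3 : HasDerivAt (fun w => (p i).eval w * Complex.exp (e i * w)) ((p i).derivative.eval z * Complex.exp (e i * z) + (p i).eval z * (Complex.exp (e i * z) * e i)) z := h1.fun_mul h2
    convert h3 using 1
    simp only [eval_add, eval_mul, eval_C]
    ring
  have hsum := HasDerivAt.fun_sum hterm
  have hzero : (fun w => ∑ i ∈ t, (p i).eval w * Complex.exp (e i * w)) = fun _ => (0:ℂ) :=
    funext h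
  rw [hzero] at hsum
  exact (hsum.unique (hasDerivAt_const z 0))

private lemma step_ne_zero {μ : ℂ} (hμ : μ ≠ 0) {q : ℂ[X]} (hq : q ≠ 0) :
    q.derivative + C μ * q ≠ 0 := by
  intro h
  have hc : (q.derivative + C μ * q).coeff q.natDegree = μ * q.leadingCoeff := by
    rw [coeff_add, coeff_derivative, coeff_natDegree_succ_eq_zero, zero_mul, zero_add,
      coeff_C_mul, Polynomial.leadingCoeff]
  rw [h] at hc
  simp only [coeff_zero] at hc
  rcases (mul_eq_zero.mp hc.symm) with h1 | h1
  · exact hμ h1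
  · exact hq (leadingCoeff_eq_zero.mp h1)

private lemma exp_poly_zero {ι : Type*} [DecidableEq ι] :
    ∀ N : ℕ, ∀ t : Finset ι, t.card = N → ∀ e : ι → ℂ, Set.InjOn e t →
      ∀ p : ι → ℂ[X], (∀ z : ℂ, ∑ i ∈ t, (p i).eval z * Complex.exp (e i * z) = 0) →
      ∀ i ∈ t, p i = 0 := by
  intro N
  induction N with
  | zero => intro t ht e _ p _ i hi; rw [Finset.card_eq_zero.mp ht] at hi; simp at hi
  | succ N IH =>
    intro t ht e he p h i hi
    obtain ⟨i₀, hi₀⟩ : t.Nonempty := Finset.card_pos.mp (by omega)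
    set e' : ι → ℂ := fun j => e j - e i₀ with he'
    have h' : ∀ z : ℂ, ∑ j ∈ t, (p j).eval z * Complex.exp (e' j * z) = 0 := by
      intro z
      have key : ∀ j, Complex.exp (e' j * z)
          = Complex.exp (e j * z) * Complex.exp (-(e i₀ * z)) := by
        intro j; rw [← Complex.exp_add]; simp only [he']; ring_nf
      calc ∑ j ∈ t, (p j).eval z * Complex.exp (e' j * z)
          = (∑ j ∈ t, (p j).eval z * Complex.exp (e j * z)) * Complex.exp (-(e i₀ * z)) := by
            rw [Finset.sum_mul]; exact Finset.sum_congr rfl fun j _ => by rw [key]; ring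
        _ = 0 := by rw [h z, zero_mul]
    set D : (ι → ℂ[X]) → (ι → ℂ[X]) := fun q j => (q j).derivative + C (e' j) * q j with hD
    have claim1 : ∀ k, ∀ z : ℂ, ∑ j ∈ t, ((D^[k] p) j).eval z * Complex.exp (e' j * z) = 0 := by
      intro k
      induction k with
      | zero => simpa using h'
      | succ k ih =>
        rw [Function.iterate_succ_apply']
        exact step_deriv t e' (D^[k] p) ih
    have claim2 : ∀ j, e' j ≠ 0 → ∀ k, p j ≠ 0 → (D^[k] p) j ≠ 0 := by
      intro j hj k
      induction k with
      | zero => simp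
      | succ k ih =>
        intro hp
        rw [Function.iterate_succ_apply']
        exact step_ne_zero hj (ih hp)
    have claim3 : ∀ k, (D^[k] p) i₀ = Polynomial.derivative^[k] (p i₀) := by
      intro k
      induction k with
      | zero => simp
      | succ k ih =>
        rw [Function.iterate_succ_apply', Function.iterate_succ_apply']
        have h0 : e' i₀ = 0 := sub_self _
        simp only [hD, ih, h0, map_zero, zero_mul, add_zero]
        rw [← hD, ih]
    have hDm0 : (D^[(p i₀).natDegree + 1] p) i₀ = 0 := by
      rw [claim3]; exact Polynomial.iterate_derivative_eq_zero (by omega)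
    have herase : ∀ z : ℂ,
        ∑ j ∈ t.erase i₀, ((D^[(p i₀).natDegree + 1] p) j).eval z * Complex.exp (e' j * z) = 0 := by
      intro z
      have hc := claim1 ((p i₀).natDegree + 1) z
      rw [← Finset.sum_erase_add t _ hi₀, hDm0] at hc
      simpa using hc
    have hIH := IH (t.erase i₀) (by rw [Finset.card_erase_of_mem hi₀, ht]; omega) e'
      (fun a ha b hb hab => he (Finset.mem_of_mem_erase ha) (Finset.mem_of_mem_erase hb)
        (by simpa [he', sub_left_inj] using hab))
      (D^[(p i₀).natDegree + 1] p) herase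
    have hp_erase : ∀ j ∈ t.erase i₀, p j = 0 := by
      intro j hj
      by_contra hpj
      have hj' : e' j ≠ 0 := sub_ne_zero.mpr
        (fun hEq => (Finset.ne_of_mem_erase hj) (he (Finset.mem_of_mem_erase hj) hi₀ hEq))
      exact claim2 j hj' _ hpj (hIH j hj)
    have hpi₀ : p i₀ = 0 := by
      apply Polynomial.funext (q := 0)
      intro z
      have hz := h z
      rw [← Finset.sum_erase_add t _ hi₀,
        Finset.sum_eq_zero (fun j hj => by rw [hp_erase j hj]; simp), zero_add] at hz
      simpa using (mul_eq_zero.mp hz).resolve_right (Complex.exp_ne_zero _)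
    by_cases hii : i = i₀
    · rw [hii]; exact hpi₀
    · exact hp_erase i (Finset.mem_erase.mpr ⟨hii, hi⟩)

/-- If `v₁, …, vₙ` are algebraic numbers linearly independent over `ℚ` and
`f ∈ ℂ[X, Y₁, …, Yₙ]` is a nonzero polynomial with algebraic coefficients, then the
function `F(x) = f(x, e^{v₁ x}, …, e^{vₙ x})` on `ℝ` is not identically zero; in fact
there is a nonzero rational `x₀` with `F(x₀) ≠ 0`. -/
theorem stmt_1 (n : ℕ) (hn : 1 ≤ n) (v : Fin n → ℂ)
    (halg : ∀ i, IsAlgebraic ℚ (v i))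
    (hlin : ∀ c : Fin n → ℚ, ∑ i, (c i : ℂ) * v i = 0 → ∀ i, c i = 0)
    (f : MvPolynomial (Option (Fin n)) ℂ) (hf : f ≠ 0)
    (hcoeff : ∀ m : Option (Fin n) →₀ ℕ, IsAlgebraic ℚ (MvPolynomial.coeff m f))
    (F : ℝ → ℂ)
    (hF : ∀ x : ℝ, F x = MvPolynomial.eval
      (fun o => Option.elim o (x : ℂ) (fun i => Complex.exp (v i * (x : ℂ)))) f) :
    (∃ x0 : ℚ, x0 ≠ 0 ∧ F (x0 : ℝ) ≠ 0) := by
  classical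
  by_contra hcon
  push_neg at hcon
  set G : ℂ → ℂ := fun z =>
    MvPolynomial.eval (fun o => Option.elim o z (fun i => Complex.exp (v i * z))) f with hGdef
  set g : MvPolynomial (Fin n) (Polynomial ℂ) := MvPolynomial.optionEquivRight ℂ (Fin n) f
    with hg
  set e : (Fin n →₀ ℕ) → ℂ := fun d => ∑ i, (d i : ℂ) * v i with he
  -- the sum formula
  have hsum : ∀ z : ℂ, G z
      = ∑ d ∈ g.support, (MvPolynomial.coeff d g).eval z * Complex.exp (e d * z) := by
    intro z
    have key : (MvPolynomial.eval₂Hom (Polynomial.evalRingHom z)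
        (fun i => Complex.exp (v i * z))).comp
        (MvPolynomial.optionEquivRight ℂ (Fin n)).toAlgHom.toRingHom
        = (MvPolynomial.eval (fun o => Option.elim o z (fun i => Complex.exp (v i * z)))) := by
      apply MvPolynomial.ringHom_ext
      · intro r
        simp [MvPolynomial.optionEquivRight_C]
      · intro o
        cases o with
        | none => simp [MvPolynomial.optionEquivRight_X_none]
        | some i => simp [MvPolynomial.optionEquivRight_X_some]
    have h1 : G z = MvPolynomial.eval₂ (Polynomial.evalRingHom z)
        (fun i => Complex.exp (v i * z)) g := by
      show (MvPolynomial.eval fun o => o.elim z fun i => Complex.exp (v i * z)) f = _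
      rw [← key]
      rfl
    rw [h1, MvPolynomial.eval₂_eq]
    apply Finset.sum_congr rfl
    intro d _
    have hprod : (∏ i ∈ d.support, Complex.exp (v i * z) ^ d i) = Complex.exp (e d * z) := by
      have h2 : ∀ i ∈ d.support, Complex.exp (v i * z) ^ d i
          = Complex.exp ((d i : ℂ) * v i * z) := by
        intro i _
        rw [← Complex.exp_nat_mul]
        ring_nf
      rw [Finset.prod_congr rfl h2, ← Complex.exp_sum]
      congr 1
      show (∑ i ∈ d.support, (d i : ℂ) * v i * z) = (∑ i : Fin n, (d i : ℂ) * v i) * z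
      rw [Finset.sum_mul]
      exact Finset.sum_subset (Finset.subset_univ _) (fun i _ hi => by
        simp [Finsupp.notMem_support_iff.mp hi])
    rw [hprod]
    rfl
  -- G vanishes at nonzero rationals
  have hFG : ∀ q : ℚ, q ≠ 0 → G ((q : ℚ) : ℂ) = 0 := by
    intro q hq
    have h1 := hF (q : ℝ)
    rw [hcon q hq] at h1
    have h2 : G (((q : ℝ) : ℂ)) = 0 := by rw [hGdef]; exact h1.symm
    rwa [Complex.ofReal_ratCast] at h2
  -- G is entire
  have hdiff : Differentiable ℂ G := by
    have hGeq : G = fun z =>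
        ∑ d ∈ g.support, (MvPolynomial.coeff d g).eval z * Complex.exp (e d * z) :=
      funext hsum
    rw [hGeq]
    apply Differentiable.fun_sum
    intro d _
    exact ((MvPolynomial.coeff d g).differentiable).mul ((differentiable_id.const_mul (e d)).cexp)
  have hanal : AnalyticOnNhd ℂ G Set.univ := analyticOnNhd_univ_iff_differentiable.mpr hdiff
  -- frequently zero near 0
  have hfreq : ∃ᶠ z in nhdsWithin 0 {(0 : ℂ)}ᶜ, G z = 0 := by
    have hqne : ∀ k : ℕ, (1 / ((k : ℚ) + 1)) ≠ 0 := by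
      intro k
      positivity
    have htend : Filter.Tendsto (fun k : ℕ => (((1 / ((k : ℚ) + 1)) : ℚ) : ℂ)) Filter.atTop
        (nhdsWithin 0 {(0 : ℂ)}ᶜ) := by
      apply tendsto_nhdsWithin_of_tendsto_nhds_of_eventually_within
      · have h1 : Filter.Tendsto (fun k : ℕ => (1 / ((k : ℝ) + 1))) Filter.atTop (nhds 0) :=
          tendsto_one_div_add_atTop_nhds_zero_nat
        have h2 := (Complex.continuous_ofReal.tendsto 0).comp h1
        have h3 : (fun k : ℕ => (((1 / ((k : ℚ) + 1)) : ℚ) : ℂ))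
            = (fun x : ℝ => (x : ℂ)) ∘ (fun k : ℕ => (1 / ((k : ℝ) + 1))) := by
          funext k
          simp [Function.comp]
        rw [h3]
        simpa using h2
      · filter_upwards with k
        simp only [Set.mem_compl_iff, Set.mem_singleton_iff]
        exact_mod_cast Rat.cast_ne_zero.mpr (hqne k)
    exact htend.frequently (Filter.Frequently.of_forall fun k => hFG _ (hqne k))
  have hG_all : ∀ z : ℂ, G z = 0 := fun z =>
    hanal.eqOn_zero_of_preconnected_of_frequently_eq_zero isPreconnected_univ (Set.mem_univ 0)
      hfreq (Set.mem_univ z)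
  -- injectivity of the exponent map
  have hinj : Set.InjOn e ↑g.support := by
    intro d1 _ d2 _ hde
    have hc := hlin (fun i => (d1 i : ℚ) - (d2 i : ℚ)) (by
      push_cast
      simp only [sub_mul]
      rw [Finset.sum_sub_distrib]
      rw [he] at hde
      rw [sub_eq_zero]
      exact hde)
    ext i
    have h2 : (d1 i : ℚ) - (d2 i : ℚ) = 0 := hc i
    have h3 : (d1 i : ℚ) = (d2 i : ℚ) := by linarith
    exact_mod_cast h3
  have hall := exp_poly_zero g.support.card g.support rfl e hinj
    (fun d => MvPolynomial.coeff d g)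
    (fun z => ((hsum z).symm.trans (hG_all z)))
  have hg0 : g = 0 := by
    apply MvPolynomial.ext
    intro d
    by_cases hd : d ∈ g.support
    · simpa using hall d hd
    · simpa using MvPolynomial.notMem_support_iff.mp hd
  apply hf
  have hinj2 := (MvPolynomial.optionEquivRight ℂ (Fin n)).injective
  apply hinj2
  rw [← hg, hg0, map_zero]
end

section
/- Let n ≥ 1 and let v_1, …, v_n be algebraic numbers that are linearly independent over ℚ. Then the map sending a polynomial f ∈ ℂ[X, Y_1, …, Y_n] with algebraic coefficients to the function x ↦ f(x, e^{v_1 x}, …, e^{v_n x}) on ℝ is injective: if f and g are two polynomials in ℂ[X, Y_1, …, Y_n], both with all coefficients algebraic numbers, such that f(x, e^{v_1 x}, …, e^{v_n x}) = g(x, e^{v_1 x}, …, e^{v_n x}) for all real x, then f = g. -/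
open Polynomial

noncomputable def Tstep (μ : ℂ) (r : Polynomial ℂ) : Polynomial ℂ :=
  derivative r + C μ * r

lemma tstep_eq_zero {μ : ℂ} (hμ : μ ≠ 0) {r : Polynomial ℂ} (h : Tstep μ r = 0) : r = 0 := by
  by_contra hr
  rcases eq_or_ne r.natDegree 0 with h0 | h0
  · have hd : derivative r = 0 := by
      have := Polynomial.eq_C_of_natDegree_eq_zero h0
      rw [this, derivative_C]
    rw [Tstep, hd, zero_add, mul_eq_zero] at h
    rcases h with h | h
    · exact hμ (by simpa using h)
    · exact hr h
  · have h1 : derivative r = -(C μ * r) := by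
      rw [eq_neg_iff_add_eq_zero]; exact h
    have h2 : (C μ * r).natDegree = r.natDegree := by
      rw [natDegree_C_mul hμ]
    have h3 : (derivative r).natDegree < r.natDegree :=
      natDegree_derivative_lt h0
    rw [h1, natDegree_neg, h2] at h3
    exact lt_irrefl _ h3

lemma tstep_iter_eq_zero {μ : ℂ} (hμ : μ ≠ 0) (k : ℕ) {r : Polynomial ℂ}
    (h : (Tstep μ)^[k] r = 0) : r = 0 := by
  induction k with
  | zero => simpa using h
  | succ k ih =>
    rw [Function.iterate_succ_apply'] at h
    exact ih (tstep_eq_zero hμ h)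

lemma hasDerivAt_expsum (s : Finset ℂ) (p : ℂ → Polynomial ℂ) (x : ℝ) :
    HasDerivAt (fun t : ℝ => ∑ μ ∈ s, (p μ).eval (t : ℂ) * Complex.exp (μ * t))
      (∑ μ ∈ s, (Tstep μ (p μ)).eval (x : ℂ) * Complex.exp (μ * x)) x := by
  apply HasDerivAt.fun_sum
  intro μ _
  have he : HasDerivAt (fun z : ℂ => Complex.exp (μ * z)) (Complex.exp (μ * x) * μ) (x : ℂ) := by
    have := ((hasDerivAt_id (x : ℂ)).const_mul μ).cexp
    simpa using this
  have h1 : HasDerivAt (fun z : ℂ => (p μ).eval z * Complex.exp (μ * z))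
      ((derivative (p μ)).eval (x:ℂ) * Complex.exp (μ * x)
        + (p μ).eval (x:ℂ) * (Complex.exp (μ * x) * μ)) (x : ℂ) :=
    ((p μ).hasDerivAt (x:ℂ)).mul he
  have h2 := h1.comp_ofReal
  convert h2 using 1
  · rfl
  simp [Tstep]
  ring

lemma expsum_zero_step (s : Finset ℂ) (p : ℂ → Polynomial ℂ)
    (h : ∀ x : ℝ, ∑ μ ∈ s, (p μ).eval (x : ℂ) * Complex.exp (μ * x) = 0) :
    ∀ x : ℝ, ∑ μ ∈ s, (Tstep μ (p μ)).eval (x : ℂ) * Complex.exp (μ * x) = 0 := by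
  intro x
  have h1 := hasDerivAt_expsum s p x
  have h2 : (fun t : ℝ => ∑ μ ∈ s, (p μ).eval (t : ℂ) * Complex.exp (μ * t))
      = fun _ => (0 : ℂ) := funext h
  rw [h2] at h1
  exact h1.unique (hasDerivAt_const x 0)

lemma expsum_zero_iter (s : Finset ℂ) (p : ℂ → Polynomial ℂ)
    (h : ∀ x : ℝ, ∑ μ ∈ s, (p μ).eval (x : ℂ) * Complex.exp (μ * x) = 0) (k : ℕ) :
    ∀ x : ℝ, ∑ μ ∈ s, ((Tstep μ)^[k] (p μ)).eval (x : ℂ) * Complex.exp (μ * x) = 0 := by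
  induction k with
  | zero => simpa using h
  | succ k ih =>
    have := expsum_zero_step s (fun μ => (Tstep μ)^[k] (p μ)) ih
    intro x
    have h2 := this x
    simpa [Function.iterate_succ_apply'] using h2

lemma expsum_key : ∀ (k : ℕ) (s : Finset ℂ) (p : ℂ → Polynomial ℂ), s.card = k →
    (∀ x : ℝ, ∑ μ ∈ s, (p μ).eval (x : ℂ) * Complex.exp (μ * x) = 0) →
    ∀ μ ∈ s, p μ = 0 := by
  intro k
  induction k with
  | zero =>
    intro s p hs h μ hμ
    rw [Finset.card_eq_zero.mp hs] at hμ
    simp at hμ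
  | succ k ih =>
    intro s p hs h μ1 hμ1
    classical
    set s' : Finset ℂ := s.image (· - μ1) with hs'def
    set q : ℂ → Polynomial ℂ := fun ν => p (ν + μ1) with hqdef
    have hinj : Function.Injective (· - μ1) := fun a b hab => by
      simpa using sub_left_injective hab
    have hq : ∀ x : ℝ, ∑ ν ∈ s', (q ν).eval (x : ℂ) * Complex.exp (ν * x) = 0 := by
      intro x
      rw [hs'def, Finset.sum_image (fun a _ b _ hab => hinj hab)]
      have : ∀ μ ∈ s, (q (μ - μ1)).eval (x:ℂ) * Complex.exp ((μ - μ1) * x)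
          = ((p μ).eval (x:ℂ) * Complex.exp (μ * x)) * (Complex.exp (μ1 * x))⁻¹ := by
        intro μ _
        rw [hqdef]
        simp only [sub_add_cancel]
        rw [sub_mul, Complex.exp_sub, div_eq_mul_inv]
        ring
      rw [Finset.sum_congr rfl this, ← Finset.sum_mul, h x, zero_mul]
    set N : ℕ := (q 0).natDegree + 1 with hN
    set q' : ℂ → Polynomial ℂ := fun ν => (Tstep ν)^[N] (q ν) with hq'def
    have hq' : ∀ x : ℝ, ∑ ν ∈ s', (q' ν).eval (x : ℂ) * Complex.exp (ν * x) = 0 :=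
      expsum_zero_iter s' q hq N
    have h00 : q' 0 = 0 := by
      have hT : Tstep 0 = (fun r : Polynomial ℂ => derivative r) := by
        funext r; simp [Tstep]
      rw [hq'def]
      simp only [hT]
      have : (fun r : Polynomial ℂ => derivative r) = ⇑(derivative (R := ℂ)) := rfl
      rw [this]
      exact Polynomial.iterate_derivative_eq_zero (by omega)
    have hzero : (0 : ℂ) ∈ s' := by
      rw [hs'def]
      exact Finset.mem_image.mpr ⟨μ1, hμ1, by simp⟩
    have herase : ∀ x : ℝ, ∑ ν ∈ s'.erase 0, (q' ν).eval (x : ℂ) * Complex.exp (ν * x) = 0 := by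
      intro x
      have := hq' x
      rw [← Finset.add_sum_erase s' _ hzero, h00] at this
      simpa using this
    have hcard : (s'.erase 0).card = k := by
      rw [Finset.card_erase_of_mem hzero, hs'def, Finset.card_image_of_injective _ hinj, hs]
      omega
    have hall := ih (s'.erase 0) q' hcard herase
    have hother : ∀ μ ∈ s, μ ≠ μ1 → p μ = 0 := by
      intro μ hμ hne
      have h1 : μ - μ1 ∈ s'.erase 0 := by
        rw [Finset.mem_erase]
        exact ⟨sub_ne_zero.mpr hne, Finset.mem_image_of_mem _ hμ⟩
      have h2 := hall _ h1
      have h3 : q (μ - μ1) = 0 := tstep_iter_eq_zero (sub_ne_zero.mpr hne) N h2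
      rw [hqdef] at h3
      simpa [sub_add_cancel] using h3
    have hfin : ∀ x : ℝ, (p μ1).eval (x : ℂ) = 0 := by
      intro x
      have hx := h x
      rw [← Finset.add_sum_erase s _ hμ1] at hx
      have hz : ∑ μ ∈ s.erase μ1, (p μ).eval (x:ℂ) * Complex.exp (μ * x) = 0 :=
        Finset.sum_eq_zero fun μ hμ => by
          rw [hother μ (Finset.mem_of_mem_erase hμ) (Finset.ne_of_mem_erase hμ)]
          simp
      rw [hz, add_zero, mul_eq_zero] at hx
      rcases hx with hx | hx
      · exact hx
      · exact absurd hx (Complex.exp_ne_zero _)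
    apply Polynomial.eq_zero_of_infinite_isRoot
    apply Set.Infinite.mono ?_ (Set.infinite_range_of_injective Complex.ofReal_injective)
    rintro z ⟨x, rfl⟩
    exact hfin x

/-- If `v₁, …, vₙ` are algebraic numbers linearly independent over `ℚ`,
then the map sending a polynomial `f ∈ ℂ[X, Y₁, …, Yₙ]` with algebraic coefficients to
the function `x ↦ f(x, e^{v₁ x}, …, e^{vₙ x})` on `ℝ` is injective. -/
theorem stmt_2 (n : ℕ) (hn : 1 ≤ n) (v : Fin n → ℂ)
    (halg : ∀ i, IsAlgebraic ℚ (v i))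
    (hlin : ∀ c : Fin n → ℚ, ∑ i, (c i : ℂ) * v i = 0 → ∀ i, c i = 0)
    (f g : MvPolynomial (Option (Fin n)) ℂ)
    (hfc : ∀ m : Option (Fin n) →₀ ℕ, IsAlgebraic ℚ (MvPolynomial.coeff m f))
    (hgc : ∀ m : Option (Fin n) →₀ ℕ, IsAlgebraic ℚ (MvPolynomial.coeff m g))
    (h : ∀ x : ℝ,
      MvPolynomial.eval
        (fun o => Option.elim o (x : ℂ) (fun i => Complex.exp (v i * (x : ℂ)))) f =
      MvPolynomial.eval
        (fun o => Option.elim o (x : ℂ) (fun i => Complex.exp (v i * (x : ℂ)))) g) :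
    f = g := by
  classical
  rw [← sub_eq_zero]
  set D : MvPolynomial (Option (Fin n)) ℂ := f - g with hD
  have he : ∀ x : ℝ,
      MvPolynomial.eval
        (fun o => Option.elim o (x : ℂ) (fun i => Complex.exp (v i * (x : ℂ)))) D = 0 := by
    intro x
    rw [hD, map_sub, h x, sub_self]
  set Λ : ((Option (Fin n)) →₀ ℕ) → ℂ := fun m => ∑ i, (m (some i) : ℂ) * v i with hΛ
  -- injectivity of (Λ m, m none) ↦ m
  have hinjΛ : ∀ m m' : (Option (Fin n)) →₀ ℕ, Λ m = Λ m' → m none = m' none → m = m' := by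
    intro m m' h1 h2
    have hsome : ∀ i, m (some i) = m' (some i) := by
      have hc := hlin (fun i => (m (some i) : ℚ) - (m' (some i) : ℚ)) ?_
      · intro i
        have := hc i
        have : ((m (some i) : ℚ)) = (m' (some i) : ℚ) := by linarith [sub_eq_zero.mp this]
        exact_mod_cast this
      · push_cast
        rw [Finset.sum_congr rfl (fun i _ => sub_mul ((m (some i) : ℂ)) _ (v i)),
          Finset.sum_sub_distrib]
        rw [hΛ] at h1
        rw [sub_eq_zero]
        exact h1
    ext o
    cases o with
    | none => exact h2
    | some i => exact hsome i
  -- eval identity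
  have heval : ∀ x : ℝ,
      ∑ m ∈ D.support, D.coeff m * (x : ℂ) ^ (m none) * Complex.exp (Λ m * x) = 0 := by
    intro x
    have := he x
    rw [MvPolynomial.eval_eq'] at this
    rw [← this]
    apply Finset.sum_congr rfl
    intro m _
    rw [Fintype.prod_option]
    simp only [Option.elim]
    rw [mul_assoc]
    congr 2
    have : ∀ i : Fin n, Complex.exp (v i * (x:ℂ)) ^ (m (some i))
        = Complex.exp ((m (some i) : ℂ) * (v i * x)) := fun i =>
      (Complex.exp_nat_mul _ _).symm
    rw [Finset.prod_congr rfl (fun i _ => this i), ← Complex.exp_sum, hΛ, Finset.sum_mul]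
    congr 1
    apply Finset.sum_congr rfl
    intro i _
    ring
  set p : ℂ → Polynomial ℂ := fun μ =>
    ∑ m ∈ D.support.filter (fun m => Λ m = μ),
      Polynomial.C (D.coeff m) * Polynomial.X ^ (m none) with hp
  set s : Finset ℂ := D.support.image Λ with hsdef
  have hkey : ∀ x : ℝ, ∑ μ ∈ s, (p μ).eval (x : ℂ) * Complex.exp (μ * x) = 0 := by
    intro x
    have hfib : ∀ μ ∈ s, (p μ).eval (x:ℂ) * Complex.exp (μ * x)
        = ∑ m ∈ D.support.filter (fun m => Λ m = μ),
            D.coeff m * (x:ℂ) ^ (m none) * Complex.exp (Λ m * x) := by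
      intro μ hμ
      rw [hp]
      simp only [Polynomial.eval_finset_sum, Polynomial.eval_mul, Polynomial.eval_C,
        Polynomial.eval_pow, Polynomial.eval_X, Finset.sum_mul]
      apply Finset.sum_congr rfl
      intro m hm
      rw [(Finset.mem_filter.mp hm).2]
    rw [Finset.sum_congr rfl hfib,
      Finset.sum_fiberwise_of_maps_to (fun m hm => Finset.mem_image_of_mem Λ hm)]
    exact heval x
  have hpz : ∀ μ ∈ s, p μ = 0 := expsum_key s.card s p rfl hkey
  -- conclude all coefficients vanish
  apply (MvPolynomial.support_eq_empty).mp
  by_contra hsupp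
  obtain ⟨m, hm⟩ := Finset.nonempty_iff_ne_empty.mpr hsupp
  have hpm := hpz (Λ m) (Finset.mem_image_of_mem Λ hm)
  have hco : (p (Λ m)).coeff (m none) = D.coeff m := by
    rw [hp]
    rw [Polynomial.finset_sum_coeff]
    rw [Finset.sum_eq_single_of_mem m (show m ∈ Finset.filter (fun m' => Λ m' = Λ m) D.support from Finset.mem_filter.mpr ⟨hm, rfl⟩)]
    · simp
    · intro m' hm' hne
      have hΛm' : Λ m' = Λ m := (Finset.mem_filter.mp hm').2
      have hnone : m none ≠ m' none := fun hcon => hne (hinjΛ m' m hΛm' hcon.symm)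
      simp only [Polynomial.coeff_C_mul, Polynomial.coeff_X_pow, if_neg hnone, mul_zero]
  rw [hpm] at hco
  simp at hco
  exact (MvPolynomial.mem_support_iff.mp hm) hco.symm
end

section
/- Assume Schanuel's Conjecture. Let v_1, …, v_n be algebraic numbers that are linearly independent over ℚ, and let t be a nonzero complex number. Then among the n+1 numbers t, e^{v_1 t}, …, e^{v_n t} there are at least n that are algebraically independent over ℚ; that is, there exists a subset of {t, e^{v_1 t}, …, e^{v_n t}} of cardinality n that is algebraically independent over ℚ. -/
lemma my_isAlgebraic_of_mul {R S : Type*} [CommRing R] [IsDomain R] [CommRing S]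
    [Algebra R S] {x : S} {y : R} (hy : y ≠ 0)
    (h : IsIntegral R (algebraMap R S y * x)) : IsAlgebraic R x := by
  obtain ⟨p, pmonic, hp⟩ := h
  refine ⟨p.comp (Polynomial.C y * Polynomial.X), ?_, ?_⟩
  · intro h0
    rcases Polynomial.comp_eq_zero_iff.mp h0 with h1 | ⟨_, h2⟩
    · exact pmonic.ne_zero h1
    · have := congrArg (fun q => Polynomial.coeff q 1) h2
      simp at this
      exact hy this
  · rw [Polynomial.aeval_comp]
    have h2 : Polynomial.aeval x (Polynomial.C y * Polynomial.X) = algebraMap R S y * x := by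
      simp
    rw [h2, Polynomial.aeval_def]
    exact hp

-- product of algebraic elements over a subalgebra of ℂ
lemma my_alg_mul (A : Subalgebra ℚ ℂ) {a z : ℂ} (ha : IsAlgebraic A a)
    (hz : IsAlgebraic A z) : IsAlgebraic A (a * z) := by
  have inj : ∀ x : A, algebraMap A ℂ x = 0 → x = 0 := fun x hx => Subtype.val_injective hx
  obtain ⟨y₁, hy₁, e₁⟩ := ha.exists_integral_multiple
  obtain ⟨y₂, hy₂, e₂⟩ := hz.exists_integral_multiple
  apply my_isAlgebraic_of_mul (mul_ne_zero hy₁ hy₂)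
  have : algebraMap A ℂ (y₁ * y₂) * (a * z)
      = (algebraMap A ℂ y₁ * a) * (algebraMap A ℂ y₂ * z) := by
    push_cast [map_mul]
    ring
  rw [this, ← Algebra.smul_def, ← Algebra.smul_def]
  exact IsIntegral.mul e₁ e₂

lemma my_qalg_mul {a b : ℂ} (ha : IsAlgebraic ℚ a) (hb : IsAlgebraic ℚ b) :
    IsAlgebraic ℚ (a * b) := by
  rw [isAlgebraic_iff_isIntegral] at ha hb ⊢
  exact ha.mul hb

open Set in
lemma my_ai_insert_iff {x : ℂ} {s : Set ℂ} (hxs : x ∉ s) :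
    AlgebraicIndependent ℚ ((↑) : ↥(insert x s) → ℂ) ↔
      AlgebraicIndependent ℚ ((↑) : s → ℂ) ∧ Transcendental (Algebra.adjoin ℚ s) x := by
  classical
  constructor
  · intro h
    have hs : AlgebraicIndependent ℚ ((↑) : s → ℂ) := h.mono (subset_insert x s)
    refine ⟨hs, ?_⟩
    have hopt : AlgebraicIndependent ℚ fun o : Option s => o.elim x (↑) := by
      have h2 := h.comp (Set.subtypeInsertEquivOption hxs).symm (Equiv.injective _)
      convert h2 using 1
      funext o
      rcases o with _ | ⟨y, hy⟩ <;> simp [Set.subtypeInsertEquivOption]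
    have := (hs.option_iff_transcendental x).mp hopt
    rwa [Subtype.range_coe] at this
  · rintro ⟨hs, htr⟩
    have hopt : AlgebraicIndependent ℚ fun o : Option s => o.elim x (↑) :=
      (hs.option_iff_transcendental x).mpr (by rwa [Subtype.range_coe])
    have h2 := hopt.comp (Set.subtypeInsertEquivOption hxs) (Equiv.injective _)
    convert h2 using 1
    funext y
    by_cases h : (y : ℂ) = x <;> simp [h, Set.subtypeInsertEquivOption]


/-- Schanuel's Conjecture: for every `n ≥ 1` and complex numbers `z₁, …, zₙ` linearly
independent over `ℚ`, there is a subset of size `n` of the `2n` numbers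
`z₁, …, zₙ, e^{z₁}, …, e^{zₙ}` that is algebraically independent over `ℚ`. -/
def SchanuelConjecture : Prop :=
  ∀ (n : ℕ), 1 ≤ n → ∀ z : Fin n → ℂ,
    (∀ c : Fin n → ℚ, ∑ i, (c i : ℂ) * z i = 0 → ∀ i, c i = 0) →
    ∃ s : Finset ℂ, s.card = n ∧
      (↑s : Set ℂ) ⊆ Set.range z ∪ Set.range (fun i => Complex.exp (z i)) ∧
      AlgebraicIndependent ℚ (fun x : s => (x : ℂ))

/-- Assuming Schanuel's Conjecture, if `v₁, …, vₙ` are algebraic numbers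
linearly independent over `ℚ` and `t ≠ 0` is complex, then among
`t, e^{v₁ t}, …, e^{vₙ t}` there are at least `n` algebraically independent numbers. -/
theorem stmt_3 (SC : SchanuelConjecture) (n : ℕ) (v : Fin n → ℂ)
    (halg : ∀ i, IsAlgebraic ℚ (v i))
    (hlin : ∀ c : Fin n → ℚ, ∑ i, (c i : ℂ) * v i = 0 → ∀ i, c i = 0)
    (t : ℂ) (ht : t ≠ 0) :
    ∃ s : Finset ℂ, s.card = n ∧
      (↑s : Set ℂ) ⊆ insert t (Set.range fun i => Complex.exp (v i * t)) ∧
      AlgebraicIndependent ℚ (fun x : s => (x : ℂ)) := by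
  classical
  rcases Nat.eq_zero_or_pos n with hn | hn
  · refine ⟨∅, by simp [hn], by simp, ?_⟩
    exact algebraicIndependent_empty_type
  -- v i ≠ 0
  have hv0 : ∀ i, v i ≠ 0 := by
    intro i hvi
    have hsum : ∑ j, ((if j = i then (1 : ℚ) else 0 : ℚ) : ℂ) * v j = 0 := by
      have he : ∀ j, ((if j = i then (1 : ℚ) else 0 : ℚ) : ℂ) * v j
          = if j = i then v j else 0 := by
        intro j; split <;> simp
      rw [Finset.sum_congr rfl fun j _ => he j, Finset.sum_ite_eq']
      simp [hvi]
    have := hlin _ hsum i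
    simp at this
  -- apply Schanuel to z j = v j * t
  have hzlin : ∀ c : Fin n → ℚ, ∑ i, (c i : ℂ) * (v i * t) = 0 → ∀ i, c i = 0 := by
    intro c hc i
    apply hlin c _ i
    have h2 : (∑ i, (c i : ℂ) * v i) * t = 0 := by
      rw [Finset.sum_mul]
      simpa [mul_assoc] using hc
    rcases mul_eq_zero.mp h2 with h | h
    · exact h
    · exact absurd h ht
  obtain ⟨s, hcard, hsub, hind⟩ := SC n hn (fun i => v i * t) hzlin
  have hindS : AlgebraicIndependent ℚ ((↑) : (↑s : Set ℂ) → ℂ) := hind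
  -- the key independence fact
  have key : ∀ x ∈ (↑s : Set ℂ), ∀ a y : ℂ, IsAlgebraic ℚ a →
      y ∈ (↑s : Set ℂ) \ {x} → x = a * y → False := by
    intro x hxs a y ha hy hxy
    have h' : AlgebraicIndependent ℚ ((↑) : ↥(insert x ((↑s : Set ℂ) \ {x})) → ℂ) := by
      apply hindS.mono
      rw [Set.insert_diff_singleton]
      exact Set.insert_subset_iff.mpr ⟨hxs, subset_rfl⟩
    have h2 := (my_ai_insert_iff (by simp)).mp h'
    apply h2.2
    have hyA : IsAlgebraic (Algebra.adjoin ℚ ((↑s : Set ℂ) \ {x})) y := by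
      have : y ∈ Algebra.adjoin ℚ ((↑s : Set ℂ) \ {x}) := Algebra.subset_adjoin hy
      exact isAlgebraic_algebraMap (⟨y, this⟩ : Algebra.adjoin ℚ ((↑s : Set ℂ) \ {x}))
    have haA : IsAlgebraic (Algebra.adjoin ℚ ((↑s : Set ℂ) \ {x})) a :=
      ha.extendScalars (algebraMap ℚ _).injective
    have := my_alg_mul _ haA hyA
    rwa [← hxy] at this
  by_cases hcase : (↑s : Set ℂ) ⊆ Set.range fun i => Complex.exp (v i * t)
  · exact ⟨s, hcard, hcase.trans (Set.subset_insert _ _), hind⟩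
  · -- there is an element of s of the form v i * t
    rw [Set.not_subset] at hcase
    obtain ⟨x, hxs, hxe⟩ := hcase
    obtain ⟨i, hi⟩ : x ∈ Set.range fun i => v i * t := by
      rcases hsub hxs with h | h
      · exact h
      · exact absurd h hxe
    have hi' : v i * t = x := hi
    -- t is not in s \ {x}
    have htns : t ∉ (↑s : Set ℂ) \ {x} := fun hts =>
      key x hxs (v i) t (halg i) hts hi'.symm
    -- every other element of s is an exponential
    have hrest : ∀ y ∈ (↑s : Set ℂ) \ {x}, y ∈ Set.range fun j => Complex.exp (v j * t) := by
      intro y hy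
      rcases hsub hy.1 with h | h
      · obtain ⟨j, hj⟩ := h
        exfalso
        have hj' : v j * t = y := hj
        refine key x hxs (v i * (v j)⁻¹) y (my_qalg_mul (halg i) ((halg j).inv)) hy ?_
        rw [← hj', ← hi']
        field_simp [hv0 j]
      · exact h
    -- x = v i * t is transcendental over the adjoin of the rest, hence so is t
    have h' : AlgebraicIndependent ℚ ((↑) : ↥(insert x ((↑s : Set ℂ) \ {x})) → ℂ) := by
      apply hindS.mono
      rw [Set.insert_diff_singleton]
      exact Set.insert_subset_iff.mpr ⟨hxs, subset_rfl⟩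
    have h2 := (my_ai_insert_iff (show x ∉ (↑s : Set ℂ) \ {x} by simp)).mp h'
    have httr : Transcendental (Algebra.adjoin ℚ ((↑s : Set ℂ) \ {x})) t := by
      intro htalg
      apply h2.2
      have := my_alg_mul _ ((halg i).extendScalars (algebraMap ℚ _).injective) htalg
      rwa [hi'] at this
    have hfin : AlgebraicIndependent ℚ ((↑) : ↥(insert t ((↑s : Set ℂ) \ {x})) → ℂ) :=
      (my_ai_insert_iff htns).mpr ⟨h2.1, httr⟩
    -- assemble the finset
    have hxmem : x ∈ s := hxs
    refine ⟨insert t (s.erase x), ?_, ?_, ?_⟩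
    · rw [Finset.card_insert_of_notMem (fun h => htns (by simpa using (Finset.mem_coe.mpr h))),
        Finset.card_erase_of_mem hxmem, hcard]
      omega
    · intro y hy
      rcases Finset.mem_insert.mp hy with rfl | hy'
      · exact Set.mem_insert _ _
      · exact Set.mem_insert_of_mem _ (hrest y (by simpa using (Finset.mem_coe.mpr hy')))
    · have hset : (↑(insert t (s.erase x)) : Set ℂ) = insert t ((↑s : Set ℂ) \ {x}) := by
        simp
      rw [← hset] at hfin
      exact hfin
end

section
/- Assume Schanuel's Conjecture. Let 𝔸 denote the field of algebraic numbers, let f_1, f_2 ∈ 𝔸[X, Y_1, …, Y_n] be coprime polynomials (they have no common nonconstant factor in 𝔸[X, Y_1, …, Y_n]), and let v_1, …, v_n be algebraic numbers linearly independent over ℚ. Define F_1(x) = f_1(x, e^{v_1 x}, …, e^{v_n x}) and F_2(x) = f_2(x, e^{v_1 x}, …, e^{v_n x}) for x ∈ ℝ. Then F_1 and F_2 have no common real zero other than 0: there is no real x_0 ≠ 0 with F_1(x_0) = 0 and F_2(x_0) = 0. -/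
/-- The field `𝔸` of algebraic numbers, as the integral closure of `ℚ` in `ℂ`. -/
noncomputable abbrev AlgNum : Subalgebra ℚ ℂ := integralClosure ℚ ℂ





set_option synthInstance.maxHeartbeats 400000 in
noncomputable instance : Field AlgNum := inferInstanceAs (Field (algebraicClosure ℚ ℂ))
instance : Algebra.IsIntegral ℚ AlgNum := integralClosure.AlgebraIsIntegral
set_option synthInstance.maxHeartbeats 400000 in
instance : IsAlgClosure ℚ AlgNum := algebraicClosure.isAlgClosure ℚ ℂ
instance : Normal ℚ AlgNum := IsAlgClosure.normal ℚ AlgNum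

open MvPolynomial in
lemma exists_map_eq_of_coeff_mem {R S σ : Type*} [CommSemiring R] [CommSemiring S] (f : R →+* S)
    (q : MvPolynomial σ S) (h : ∀ d, MvPolynomial.coeff d q ∈ Set.range f) :
    ∃ q₀ : MvPolynomial σ R, MvPolynomial.map f q₀ = q := by
  choose g hg using h
  refine ⟨∑ d ∈ q.support, MvPolynomial.monomial d (g d), ?_⟩
  rw [map_sum]
  simp_rw [MvPolynomial.map_monomial, hg]
  exact q.support_sum_monomial_coeff

lemma rational_of_fixed {K : Type*} [Field K] [Algebra ℚ K] [FiniteDimensional ℚ K] [IsGalois ℚ K]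
    (c : K) (h : ∀ σ : K ≃ₐ[ℚ] K, σ c = c) : ∃ q : ℚ, algebraMap ℚ K q = c := by
  have hc : c ∈ IntermediateField.fixedField (⊤ : Subgroup (K ≃ₐ[ℚ] K)) := fun σ => h σ
  have h2 : IntermediateField.fixedField (⊤ : Subgroup (K ≃ₐ[ℚ] K)) = ⊥ :=
    OrderIso.map_bot (@IsGalois.intermediateFieldEquivSubgroup ℚ _ K _ _ _ _).symm
  rw [h2] at hc
  exact IntermediateField.mem_bot.mp hc

set_option maxHeartbeats 1000000 in
set_option synthInstance.maxHeartbeats 1000000 in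
theorem AlgebraicIndependent.algNum {ι : Type*} {x : ι → ℂ} (hx : AlgebraicIndependent ℚ x) :
    AlgebraicIndependent AlgNum x := by
  classical
  rw [algebraicIndependent_iff]
  intro p hp
  by_contra hp0
  let s : Finset AlgNum := p.support.image (fun d => MvPolynomial.coeff d p)
  let K : IntermediateField ℚ AlgNum := IntermediateField.adjoin ℚ (s : Set AlgNum)
  haveI : FiniteDimensional ℚ K :=
    IntermediateField.finiteDimensional_adjoin (fun y _ => Algebra.IsIntegral.isIntegral y)
  let N := IntermediateField.normalClosure ℚ K AlgNum
  haveI : Normal ℚ N := normalClosure.normal ℚ K AlgNum (h := IsAlgClosure.normal ℚ AlgNum)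
  haveI : IsGalois ℚ N := IsGalois.mk
  haveI : Fintype (N ≃ₐ[ℚ] N) := AlgEquiv.fintype ℚ N
  have hcoeff : ∀ d, MvPolynomial.coeff d p ∈ Set.range (algebraMap N AlgNum) := by
    intro d
    by_cases hd : d ∈ p.support
    · have h1 : MvPolynomial.coeff d p ∈ K :=
        IntermediateField.subset_adjoin ℚ _ (Finset.mem_coe.mpr (Finset.mem_image_of_mem _ hd))
      have h2 : MvPolynomial.coeff d p ∈ N := K.le_normalClosure h1
      exact ⟨⟨_, h2⟩, rfl⟩
    · rw [MvPolynomial.notMem_support_iff.mp hd]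
      exact ⟨0, map_zero _⟩
  obtain ⟨p', hp'⟩ := exists_map_eq_of_coeff_mem (algebraMap N AlgNum) p hcoeff
  have hp'0 : p' ≠ 0 := by rintro rfl; rw [map_zero] at hp'; exact hp0 hp'.symm
  let q : MvPolynomial ι N := ∏ σ : N ≃ₐ[ℚ] N, MvPolynomial.map (σ : N →+* N) p'
  have hq0 : q ≠ 0 := by
    rw [Finset.prod_ne_zero_iff]
    intro σ _ h0
    exact hp'0 (MvPolynomial.map_injective (σ : N →+* N) σ.injective
      (by rw [h0, map_zero]))
  have hinv : ∀ τ : N ≃ₐ[ℚ] N, MvPolynomial.map (τ : N →+* N) q = q := by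
    intro τ
    rw [map_prod]
    have : ∀ σ : N ≃ₐ[ℚ] N,
        MvPolynomial.map (τ : N →+* N) (MvPolynomial.map (σ : N →+* N) p')
        = MvPolynomial.map ((τ * σ : N ≃ₐ[ℚ] N) : N →+* N) p' := by
      intro σ
      rw [MvPolynomial.map_map]
      rfl
    simp_rw [this]
    exact Fintype.prod_equiv (Equiv.mulLeft τ) _ _ (fun σ => rfl)
  have hrange : ∀ d, MvPolynomial.coeff d q ∈ Set.range (algebraMap ℚ N) := by
    intro d
    obtain ⟨r, hr⟩ := rational_of_fixed (MvPolynomial.coeff d q) (fun τ => by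
      conv_rhs => rw [← hinv τ]
      rw [MvPolynomial.coeff_map]
      rfl)
    exact ⟨r, hr⟩
  obtain ⟨q₀, hq₀⟩ := exists_map_eq_of_coeff_mem (algebraMap ℚ N) q hrange
  let evC : N →+* ℂ := (algebraMap AlgNum ℂ).comp (algebraMap N AlgNum)
  let E : MvPolynomial ι N →+* ℂ := MvPolynomial.eval₂Hom evC x
  have hfac : E (MvPolynomial.map ((1 : N ≃ₐ[ℚ] N) : N →+* N) p') = 0 := by
    have h1 : ((1 : N ≃ₐ[ℚ] N) : N →+* N) = RingHom.id N := by ext y; rfl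
    rw [h1, MvPolynomial.map_id]
    have : MvPolynomial.eval₂ evC x p' = MvPolynomial.eval₂ (algebraMap AlgNum ℂ) x p := by
      rw [← hp', MvPolynomial.eval₂_map]
    show MvPolynomial.eval₂ evC x p' = 0
    rw [this, ← MvPolynomial.aeval_def, hp]
  have hEq : E q = 0 := by
    show MvPolynomial.eval₂ evC x q = 0
    rw [show MvPolynomial.eval₂ evC x q = E q from rfl]
    unfold q
    rw [map_prod]
    exact Finset.prod_eq_zero (Finset.mem_univ 1) hfac
  have hEq₀ : MvPolynomial.aeval x q₀ = 0 := by
    have h3 : evC.comp (algebraMap ℚ N) = algebraMap ℚ ℂ := Subsingleton.elim _ _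
    have : E (MvPolynomial.map (algebraMap ℚ N) q₀) = MvPolynomial.eval₂ (algebraMap ℚ ℂ) x q₀ := by
      show MvPolynomial.eval₂ evC x _ = _
      rw [MvPolynomial.eval₂_map, h3]
    rw [MvPolynomial.aeval_def, ← this, hq₀, hEq]
  have hq₀0 : q₀ = 0 := (algebraicIndependent_iff.mp hx) q₀ hEq₀
  rw [hq₀0, map_zero] at hq₀
  exact hq0 hq₀.symm

open Polynomial nonZeroDivisors in
lemma bezout_of_isRelPrime {B : Type*} [CommRing B] [IsDomain B] [UniqueFactorizationMonoid B]
    {g1 g2 : Polynomial B} (hcop : IsRelPrime g1 g2) :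
    ∃ (a b : Polynomial B) (d : B), d ≠ 0 ∧ a * g1 + b * g2 = Polynomial.C d := by
  classical
  letI : NormalizationMonoid B := UniqueFactorizationMonoid.normalizationMonoid.toNormalizationMonoid
  letI : NormalizedGCDMonoid B := UniqueFactorizationMonoid.toNormalizedGCDMonoid B
  have hcase : ∀ g : Polynomial B, IsUnit g → (g = g1 ∨ g = g2) →
      ∃ (a b : Polynomial B) (d : B), d ≠ 0 ∧ a * g1 + b * g2 = Polynomial.C d := by
    intro g hg hor
    obtain ⟨r, hru, hrg⟩ := Polynomial.isUnit_iff.mp hg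
    obtain ⟨u, hu⟩ := hru
    rcases hor with rfl | rfl
    · exact ⟨Polynomial.C ↑u⁻¹, 0, 1, one_ne_zero, by
        rw [← hrg, ← hu, zero_mul, add_zero, ← Polynomial.C_mul, Units.inv_mul, Polynomial.C_1]⟩
    · exact ⟨0, Polynomial.C ↑u⁻¹, 1, one_ne_zero, by
        rw [← hrg, ← hu, zero_mul, zero_add, ← Polynomial.C_mul, Units.inv_mul, Polynomial.C_1]⟩
  rcases eq_or_ne g1 0 with rfl | h1
  · exact hcase g2 (hcop (dvd_zero g2) dvd_rfl) (Or.inr rfl)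
  rcases eq_or_ne g2 0 with rfl | h2
  · exact hcase g1 (hcop dvd_rfl (dvd_zero g1)) (Or.inl rfl)
  set K := FractionRing B
  have hinj : Function.Injective (algebraMap B K) := IsFractionRing.injective B K
  have hK1 : g1.map (algebraMap B K) ≠ 0 := (Polynomial.map_ne_zero_iff hinj).mpr h1
  have hcK : IsCoprime (g1.map (algebraMap B K)) (g2.map (algebraMap B K)) := by
    by_contra hnc
    set g := EuclideanDomain.gcd (g1.map (algebraMap B K)) (g2.map (algebraMap B K)) with hgdef
    have hgu : ¬ IsUnit g := fun h => hnc (EuclideanDomain.gcd_isUnit_iff.mp h)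
    have hg0 : g ≠ 0 := fun h => hK1 (EuclideanDomain.gcd_eq_zero_iff.mp h).1
    set h0 := (IsLocalization.integerNormalization B⁰ g).primPart with hh
    have hprim : h0.IsPrimitive := Polynomial.isPrimitive_primPart _
    have hhu : ¬ IsUnit h0 := fun hu =>
      hgu (Polynomial.isUnit_or_eq_zero_of_isUnit_integerNormalization_primPart hg0 hu)
    have key : ∀ p : Polynomial B, p ≠ 0 → g ∣ p.map (algebraMap B K) → h0 ∣ p := by
      intro p hp hdvd
      obtain ⟨c, hc⟩ := IsLocalization.integerNormalization_map_to_map B⁰ g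
      have hcne : algebraMap B K (c : B) ≠ 0 := fun hcc =>
        nonZeroDivisors.coe_ne_zero c (hinj (by rw [hcc, map_zero]))
      have hmapdvd : h0.map (algebraMap B K) ∣ g := by
        have h1' : h0 ∣ IsLocalization.integerNormalization B⁰ g := Polynomial.primPart_dvd _
        have h2' : h0.map (algebraMap B K) ∣
            (IsLocalization.integerNormalization B⁰ g).map (algebraMap B K) :=
          Polynomial.map_dvd _ h1'
        rw [hc, ← algebraMap_smul K (c : B) g, Polynomial.smul_eq_C_mul] at h2'
        exact (IsUnit.dvd_mul_left (Polynomial.isUnit_C.mpr (Ne.isUnit hcne))).mp h2'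
      have hpp : h0.map (algebraMap B K) ∣ (p.primPart).map (algebraMap B K) := by
        have hcontne : algebraMap B K (p.content) ≠ 0 := fun hcc =>
          (Polynomial.content_eq_zero_iff.not.mpr hp) (hinj (by rw [hcc, map_zero]))
        have heq : p.map (algebraMap B K) =
            Polynomial.C (algebraMap B K p.content) * (p.primPart).map (algebraMap B K) := by
          conv_lhs => rw [p.eq_C_content_mul_primPart]
          rw [Polynomial.map_mul, Polynomial.map_C]
        have hd2 : h0.map (algebraMap B K) ∣
            Polynomial.C (algebraMap B K p.content) * (p.primPart).map (algebraMap B K) := by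
          rw [← heq]; exact dvd_trans hmapdvd hdvd
        exact (IsUnit.dvd_mul_left (Polynomial.isUnit_C.mpr (Ne.isUnit hcontne))).mp hd2
      exact dvd_trans
        (hprim.dvd_of_fraction_map_dvd_fraction_map (K := K) hpp)
        p.primPart_dvd
    exact hhu (hcop (key g1 h1 (EuclideanDomain.gcd_dvd_left _ _))
      (key g2 h2 (EuclideanDomain.gcd_dvd_right _ _)))
  obtain ⟨a', b', hab⟩ := hcK
  obtain ⟨c, hc⟩ := IsLocalization.integerNormalization_map_to_map B⁰ a'
  obtain ⟨e, he⟩ := IsLocalization.integerNormalization_map_to_map B⁰ b'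
  rw [← algebraMap_smul K (c : B) a', Polynomial.smul_eq_C_mul] at hc
  rw [← algebraMap_smul K (e : B) b', Polynomial.smul_eq_C_mul] at he
  refine ⟨Polynomial.C (e : B) * IsLocalization.integerNormalization B⁰ a',
          Polynomial.C (c : B) * IsLocalization.integerNormalization B⁰ b',
          (c : B) * (e : B), mul_ne_zero (nonZeroDivisors.coe_ne_zero c)
            (nonZeroDivisors.coe_ne_zero e), ?_⟩
  apply Polynomial.map_injective _ hinj
  rw [Polynomial.map_add, Polynomial.map_mul, Polynomial.map_mul, Polynomial.map_mul,
    Polynomial.map_mul, hc, he, Polynomial.map_C, Polynomial.map_C, Polynomial.map_C, map_mul]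
  rw [Polynomial.C_mul]
  linear_combination (Polynomial.C ((algebraMap B K) (c : B)) *
    Polynomial.C ((algebraMap B K) (e : B))) * hab

lemma IsRelPrime.algEquiv_map {R S : Type*} [CommSemiring R] [CommSemiring S]
    (e : R ≃+* S) {a b : R} (h : IsRelPrime a b) : IsRelPrime (e a) (e b) := by
  intro d hd1 hd2
  have h1 : e.symm d ∣ a := by
    have := map_dvd e.symm hd1; rwa [RingEquiv.symm_apply_apply] at this
  have h2 : e.symm d ∣ b := by
    have := map_dvd e.symm hd2; rwa [RingEquiv.symm_apply_apply] at this
  have := (h h1 h2).map e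
  rwa [RingEquiv.apply_symm_apply] at this

open MvPolynomial in
lemma elim_var {A : Type*} [Field A] [Algebra A ℂ] {n : ℕ}
    {f1 f2 : MvPolynomial (Option (Fin n)) A} (hcop : IsRelPrime f1 f2)
    {w : Option (Fin n) → ℂ} (hf1 : MvPolynomial.aeval w f1 = 0)
    (hf2 : MvPolynomial.aeval w f2 = 0) (j : Option (Fin n)) :
    ¬ AlgebraicIndependent A (fun i : {i : Option (Fin n) // i ≠ j} => w i) := by
  classical
  intro hAI
  set σ' := {i : Option (Fin n) // i ≠ j}
  let ej : Option σ' ≃ Option (Fin n) := Equiv.optionSubtypeNe j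
  let Φ : MvPolynomial (Option (Fin n)) A ≃ₐ[A] Polynomial (MvPolynomial σ' A) :=
    (MvPolynomial.renameEquiv A ej.symm).trans (MvPolynomial.optionEquivLeft A σ')
  have hcop' : IsRelPrime (Φ f1) (Φ f2) := hcop.algEquiv_map Φ.toRingEquiv
  obtain ⟨a, b, d, hd0, habd⟩ := bezout_of_isRelPrime hcop'
  -- evaluation
  let φ₀ : MvPolynomial σ' A →+* ℂ := (MvPolynomial.aeval (fun i : σ' => w i)).toRingHom
  let Ψ : Polynomial (MvPolynomial σ' A) →+* ℂ := Polynomial.eval₂RingHom φ₀ (w j)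
  have hcomm : ∀ f : MvPolynomial (Option (Fin n)) A, Ψ (Φ f) = MvPolynomial.aeval w f := by
    intro f
    have : Ψ.comp (Φ : MvPolynomial (Option (Fin n)) A →+* Polynomial (MvPolynomial σ' A)) =
        (MvPolynomial.aeval w).toRingHom := by
      apply MvPolynomial.ringHom_ext
      · intro r
        simp only [RingHom.comp_apply, AlgHom.toRingHom_eq_coe, RingHom.coe_coe]
        have hC : Φ (C r) = Polynomial.C (C r) := by
          simp [Φ, AlgEquiv.trans_apply, MvPolynomial.rename_C,
            MvPolynomial.optionEquivLeft_C]
        rw [hC]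
        simp [Ψ, φ₀]
      · intro i
        simp only [RingHom.comp_apply, AlgHom.toRingHom_eq_coe, RingHom.coe_coe]
        rcases eq_or_ne i j with rfl | hij
        · have hX : Φ (X i) = Polynomial.X := by
            simp [Φ, AlgEquiv.trans_apply, MvPolynomial.renameEquiv_apply,
              Equiv.optionSubtypeNe_symm_self, MvPolynomial.rename_X,
              MvPolynomial.optionEquivLeft_X_none]
            rw [show ej.symm i = none from Equiv.optionSubtypeNe_symm_self i]
            exact MvPolynomial.optionEquivLeft_X_none A σ'
          rw [hX]
          simp [Ψ, aeval_X]
        · have hX : Φ (X i) = Polynomial.C (X ⟨i, hij⟩) := by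
            simp [Φ, AlgEquiv.trans_apply, MvPolynomial.renameEquiv_apply,
              Equiv.optionSubtypeNe_symm_of_ne hij, MvPolynomial.rename_X,
              MvPolynomial.optionEquivLeft_X_some]
            rw [show ej.symm i = some ⟨i, hij⟩ from Equiv.optionSubtypeNe_symm_of_ne hij]
            exact MvPolynomial.optionEquivLeft_X_some A σ' _
          rw [hX]
          simp [Ψ, φ₀, aeval_X]
    exact congrFun (congrArg DFunLike.coe this) f
  have hd : MvPolynomial.aeval (fun i : σ' => w i) d = 0 := by
    have h1 : Ψ (Polynomial.C d) = MvPolynomial.aeval (fun i : σ' => w i) d := by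
      simp [Ψ, φ₀]
    have h2 : Ψ (a * Φ f1 + b * Φ f2) = 0 := by
      rw [map_add, map_mul, map_mul, hcomm f1, hcomm f2, hf1, hf2, mul_zero, mul_zero, add_zero]
    rw [← h1, ← habd, h2]
  exact hd0 (hAI.eq_zero_of_aeval_eq_zero d hd)

open MvPolynomial in
lemma AlgebraicIndependent.scaleUnits {R ι : Type*} [CommRing R] [Nontrivial R] [Algebra R ℂ]
    {y : ι → ℂ} (h : AlgebraicIndependent R y) (c : ι → R) (hc : ∀ i, IsUnit (c i)) :
    AlgebraicIndependent R (fun i => algebraMap R ℂ (c i) * y i) := by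
  choose u hu using hc
  have hinj : Function.Injective (MvPolynomial.aeval (R := R) y) :=
    algebraicIndependent_iff_injective_aeval.mp h
  rw [algebraicIndependent_iff_injective_aeval]
  set S : MvPolynomial ι R →ₐ[R] MvPolynomial ι R :=
    MvPolynomial.aeval (fun i => MvPolynomial.C (c i) * MvPolynomial.X i) with hS
  set S' : MvPolynomial ι R →ₐ[R] MvPolynomial ι R :=
    MvPolynomial.aeval (fun i => MvPolynomial.C (((u i)⁻¹ : Rˣ) : R) * MvPolynomial.X i) with hS'
  have hSS : S'.comp S = AlgHom.id R _ := by
    apply MvPolynomial.algHom_ext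
    intro i
    simp only [AlgHom.comp_apply, AlgHom.id_apply, hS, hS', aeval_X, map_mul, aeval_C]
    rw [← hu i]
    simp only [algebraMap_eq, aeval_X]
    rw [← mul_assoc, ← C_mul, Units.mul_inv, map_one, one_mul]
  have hcomp : (MvPolynomial.aeval (fun i => algebraMap R ℂ (c i) * y i) : _ →ₐ[R] ℂ)
      = (MvPolynomial.aeval y).comp S := by
    apply MvPolynomial.algHom_ext
    intro i
    simp [hS, aeval_X]
  intro p q hpq
  have h1 : MvPolynomial.aeval y (S p) = MvPolynomial.aeval y (S q) := by
    have hh := congrFun (congrArg DFunLike.coe hcomp)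
    simp only [AlgHom.comp_apply] at hh
    rw [← hh p, ← hh q]; exact hpq
  have h2 : S p = S q := hinj h1
  have := congrArg S' h2
  have e1 := congrFun (congrArg DFunLike.coe hSS) p
  have e2 := congrFun (congrArg DFunLike.coe hSS) q
  simp only [AlgHom.comp_apply, AlgHom.id_apply] at e1 e2
  rwa [e1, e2] at this

open MvPolynomial in
lemma pairdep {R : Type*} [CommRing R] [Nontrivial R] [Algebra R ℂ] {y : Fin 2 → ℂ}
    (h : AlgebraicIndependent R y) {a b : R} (ha : a ≠ 0)
    (hrel : algebraMap R ℂ a * y 0 = algebraMap R ℂ b * y 1) : False := by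
  have hp : (MvPolynomial.C a * MvPolynomial.X 0 - MvPolynomial.C b * MvPolynomial.X 1 :
      MvPolynomial (Fin 2) R) = 0 := by
    apply h.eq_zero_of_aeval_eq_zero
    rw [map_sub, map_mul, map_mul, aeval_C, aeval_C, aeval_X, aeval_X, sub_eq_zero, hrel]
  have := congrArg (MvPolynomial.coeff (Finsupp.single 0 1)) hp
  rw [MvPolynomial.coeff_sub] at this
  rw [MvPolynomial.coeff_C_mul, MvPolynomial.coeff_C_mul, MvPolynomial.coeff_X',
    MvPolynomial.coeff_X'] at this
  rw [if_pos rfl, if_neg (by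
    intro hcon
    have := (Finsupp.single_eq_single_iff _ _ _ _).mp hcon
    simp at this)] at this
  simp at this
  exact ha this


set_option maxHeartbeats 2000000 in
set_option synthInstance.maxHeartbeats 1000000 in
/-- Assuming Schanuel's Conjecture, if `f₁, f₂ ∈ 𝔸[X, Y₁, …, Yₙ]` are
coprime (no common nonconstant factor) and `v₁, …, vₙ` are algebraic numbers linearly
independent over `ℚ`, then `F₁(x) = f₁(x, e^{v₁ x}, …, e^{vₙ x})` and
`F₂(x) = f₂(x, e^{v₁ x}, …, e^{vₙ x})` have no common real zero other than `0`. -/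
theorem stmt_4 (SC : SchanuelConjecture) (n : ℕ)
    (f1 f2 : MvPolynomial (Option (Fin n)) AlgNum)
    (hcop : IsRelPrime f1 f2)
    (v : Fin n → ℂ)
    (halg : ∀ i, IsAlgebraic ℚ (v i))
    (hlin : ∀ c : Fin n → ℚ, ∑ i, (c i : ℂ) * v i = 0 → ∀ i, c i = 0) :
    ¬ ∃ x0 : ℝ, x0 ≠ 0 ∧
      MvPolynomial.eval₂ (AlgNum.val.toRingHom)
        (fun o => Option.elim o (x0 : ℂ) (fun i => Complex.exp (v i * (x0 : ℂ)))) f1 = 0 ∧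
      MvPolynomial.eval₂ (AlgNum.val.toRingHom)
        (fun o => Option.elim o (x0 : ℂ) (fun i => Complex.exp (v i * (x0 : ℂ)))) f2 = 0 := by
  classical
  rintro ⟨x0, hx0, hz1, hz2⟩
  set w : Option (Fin n) → ℂ :=
    (fun o => Option.elim o (x0 : ℂ) (fun i => Complex.exp (v i * (x0 : ℂ)))) with hw
  set z : Fin n → ℂ := fun i => v i * (x0 : ℂ) with hz
  have hw1 : MvPolynomial.aeval w f1 = 0 := by rw [MvPolynomial.aeval_def]; exact hz1
  have hw2 : MvPolynomial.aeval w f2 = 0 := by rw [MvPolynomial.aeval_def]; exact hz2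
  have hx0c : (x0 : ℂ) ≠ 0 := Complex.ofReal_ne_zero.mpr hx0
  have hv0 : ∀ i, v i ≠ 0 := by
    intro i hvi
    have hs : ∑ j, ((Pi.single i 1 : Fin n → ℚ) j : ℂ) * v j = 0 := by
      rw [Finset.sum_eq_single i]
      · simp [hvi]
      · intro b _ hb; simp [Pi.single_eq_of_ne hb]
      · intro hb; exact absurd (Finset.mem_univ i) hb
    have := hlin _ hs i
    simp at this
  rcases Nat.eq_zero_or_pos n with hn0 | hn
  · subst hn0
    haveI : IsEmpty {i : Option (Fin 0) // i ≠ none} := ⟨by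
      rintro ⟨o, ho⟩
      cases o with
      | none => exact ho rfl
      | some i => exact i.elim0⟩
    exact elim_var hcop hw1 hw2 none algebraicIndependent_empty_type
  -- Schanuel
  have hzlin : ∀ c : Fin n → ℚ, ∑ i, (c i : ℂ) * z i = 0 → ∀ i, c i = 0 := by
    intro c hc
    apply hlin c
    have : (∑ i, (c i : ℂ) * v i) * (x0 : ℂ) = 0 := by
      rw [Finset.sum_mul, ← hc]
      congr 1; funext i; simp [hz]; ring
    rcases mul_eq_zero.mp this with h | h
    · exact h
    · exact absurd h hx0c
  obtain ⟨s, hcard, hsub, hAIq⟩ := SC n hn z hzlin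
  have hAIs : AlgebraicIndependent AlgNum (fun x : s => (x : ℂ)) := hAIq.algNum
  set vA : Fin n → AlgNum := fun i => ⟨v i, ((halg i).isIntegral)⟩ with hvA
  have hvA0 : ∀ i, vA i ≠ 0 := fun i h => hv0 i (congrArg Subtype.val h)
  -- at most one element of s lies in range z
  have hunique : ∀ a, a ∈ s → ∀ b, b ∈ s → ∀ i i' : Fin n, a = z i → b = z i' → a = b := by
    intro a ha b hb i i' hai hbi'
    subst hai
    subst hbi'
    by_contra hab
    let g : Fin 2 → {x // x ∈ s} := ![⟨z i, ha⟩, ⟨z i', hb⟩]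
    have ginj : Function.Injective g := by
      intro x y hxy
      fin_cases x <;> fin_cases y
      · rfl
      · exact absurd (congrArg Subtype.val hxy) hab
      · exact absurd (congrArg Subtype.val hxy).symm hab
      · rfl
    have h2 := hAIs.comp g ginj
    apply pairdep h2 (a := vA i') (b := vA i) (hvA0 i')
    have e0 : (((fun x : {x // x ∈ s} => (x : ℂ)) ∘ g) 0) = z i := rfl
    have e1 : (((fun x : {x // x ∈ s} => (x : ℂ)) ∘ g) 1) = z i' := rfl
    show (v i') * (((fun x : {x // x ∈ s} => (x : ℂ)) ∘ g) 0)
        = (v i) * (((fun x : {x // x ∈ s} => (x : ℂ)) ∘ g) 1)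
    rw [e0, e1, hz]
    ring
  by_cases hA : ∀ a ∈ s, a ∉ Set.range z
  · -- case A : s consists of exponentials
    have hsubexp : s ⊆ Finset.image (fun i => Complex.exp (z i)) Finset.univ := by
      intro a ha
      rcases hsub ha with h | h
      · exact absurd h (hA a ha)
      · obtain ⟨i, hi⟩ := h
        exact Finset.mem_image.mpr ⟨i, Finset.mem_univ i, hi⟩
    have hseq : s = Finset.image (fun i => Complex.exp (z i)) Finset.univ := by
      apply Finset.eq_of_subset_of_card_le hsubexp
      calc (Finset.image (fun i => Complex.exp (z i)) Finset.univ).card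
          ≤ (Finset.univ : Finset (Fin n)).card := Finset.card_image_le
        _ = n := by simp
        _ = s.card := hcard.symm
    have hexpinj : ∀ i i' : Fin n, Complex.exp (z i) = Complex.exp (z i') → i = i' := by
      have hci : (Finset.image (fun i => Complex.exp (z i)) Finset.univ).card
          = (Finset.univ : Finset (Fin n)).card := by rw [← hseq, hcard]; simp
      have := Finset.card_image_iff.mp hci
      intro i i' h
      exact this (Finset.mem_coe.mpr (Finset.mem_univ i)) (Finset.mem_coe.mpr (Finset.mem_univ i')) h
    have hmem : ∀ i : Fin n, Complex.exp (z i) ∈ s := by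
      intro i; rw [hseq]; exact Finset.mem_image.mpr ⟨i, Finset.mem_univ i, rfl⟩
    let θ : {i : Option (Fin n) // i ≠ none} → {x // x ∈ s} := fun x =>
      match x with
      | ⟨none, hx⟩ => absurd rfl hx
      | ⟨some i, _⟩ => ⟨Complex.exp (z i), hmem i⟩
    have θinj : Function.Injective θ := by
      rintro ⟨o1, h1⟩ ⟨o2, h2⟩ hxy
      cases o1 with
      | none => exact absurd rfl h1
      | some i =>
        cases o2 with
        | none => exact absurd rfl h2
        | some i' =>
          have : Complex.exp (z i) = Complex.exp (z i') := congrArg Subtype.val hxy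
          exact Subtype.ext (congrArg some (hexpinj i i' this))
    have hfinal := hAIs.comp θ θinj
    have hco : ((fun x : {x // x ∈ s} => (x : ℂ)) ∘ θ)
        = fun x : {i : Option (Fin n) // i ≠ none} => w ↑x := by
      funext x
      rcases x with ⟨o, ho⟩
      cases o with
      | none => exact absurd rfl ho
      | some i => rfl
    rw [hco] at hfinal
    exact elim_var hcop hw1 hw2 none hfinal
  · -- case B : one element of s is z k
    push_neg at hA
    obtain ⟨a0, ha0s, k, ha0z⟩ : ∃ a0 ∈ s, ∃ k, a0 = z k := by
      obtain ⟨a0, ha0s, ha0r⟩ := hA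
      obtain ⟨k, hk⟩ := ha0r
      exact ⟨a0, ha0s, k, hk.symm⟩
    set s' : Finset ℂ := s.erase a0 with hs'
    have hs'card : s'.card = n - 1 := by rw [hs', Finset.card_erase_of_mem ha0s, hcard]
    have hs'sub : ∀ b : {x // x ∈ s'}, ∃ i, Complex.exp (z i) = (b : ℂ) := by
      rintro ⟨b, hb⟩
      have hbs : b ∈ s := Finset.mem_of_mem_erase hb
      rcases hsub hbs with h | h
      · obtain ⟨i', hi'⟩ := h
        have : b = a0 := hunique b hbs a0 ha0s i' k hi'.symm ha0z
        exact absurd this (Finset.ne_of_mem_erase hb)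
      · obtain ⟨i, hi⟩ := h
        exact ⟨i, hi⟩
    choose ψ hψ using hs'sub
    have ψinj : Function.Injective ψ := by
      intro b b' h
      apply Subtype.ext
      rw [← hψ b, ← hψ b', h]
    set I : Finset (Fin n) := s'.attach.image ψ with hI
    have hIcard : I.card = n - 1 := by
      rw [hI, Finset.card_image_of_injective _ ψinj, Finset.card_attach, hs'card]
    obtain ⟨i0, hi0⟩ : ∃ i0 : Fin n, i0 ∉ I := by
      by_contra hcon
      push_neg at hcon
      have : I = Finset.univ := Finset.eq_univ_iff_forall.mpr hcon
      rw [this] at hIcard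
      simp at hIcard
      omega
    have hexp : ∀ i : Fin n, i ≠ i0 → ∃ b : {x // x ∈ s'}, ψ b = i := by
      have hIsub : I ⊆ Finset.univ.erase i0 := by
        intro i hi
        apply Finset.mem_erase.mpr
        refine ⟨?_, Finset.mem_univ i⟩
        rintro rfl
        exact hi0 hi
      have hIeq : I = Finset.univ.erase i0 := by
        apply Finset.eq_of_subset_of_card_le hIsub
        apply le_of_eq
        rw [Finset.card_erase_of_mem (Finset.mem_univ i0), hIcard]
        simp
      intro i hi
      have : i ∈ I := by
        rw [hIeq]
        exact Finset.mem_erase.mpr ⟨hi, Finset.mem_univ i⟩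
      obtain ⟨b, _, hb⟩ := Finset.mem_image.mp this
      exact ⟨b, hb⟩
    have hmem' : ∀ i : Fin n, i ≠ i0 → Complex.exp (z i) ∈ s' := by
      intro i hi
      obtain ⟨b, hb⟩ := hexp i hi
      have : Complex.exp (z i) = (b : ℂ) := by rw [← hb, hψ b]
      rw [this]
      exact b.2
    have hexpinj' : ∀ i i' : Fin n, i ≠ i0 → i' ≠ i0 →
        Complex.exp (z i) = Complex.exp (z i') → i = i' := by
      intro i i' hi hi' h
      obtain ⟨b, hb⟩ := hexp i hi
      obtain ⟨b', hb'⟩ := hexp i' hi'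
      have e1 : (b : ℂ) = Complex.exp (z i) := by rw [← hb, hψ b]  
      have e2 : (b' : ℂ) = Complex.exp (z i') := by rw [← hb', hψ b']
      have : b = b' := Subtype.ext (by rw [e1, e2, h])
      rw [← hb, ← hb', this]
    -- scaling
    set c : AlgNum := ⟨(v k)⁻¹, ((halg k).inv).isIntegral⟩ with hc
    have hcu : IsUnit c := by
      apply IsUnit.of_mul_eq_one (vA k)
      apply Subtype.ext
      show (v k)⁻¹ * v k = 1
      exact inv_mul_cancel₀ (hv0 k)
    set cc : {x // x ∈ s} → AlgNum := fun a => if a = (⟨a0, ha0s⟩ : {x // x ∈ s}) then c else 1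
      with hccdef
    have hccu : ∀ a, IsUnit (cc a) := by
      intro a
      show IsUnit (if a = (⟨a0, ha0s⟩ : {x // x ∈ s}) then c else 1)
      split_ifs
      · exact hcu
      · exact isUnit_one
    have hscaled := hAIs.scaleUnits cc hccu
    set y' : {x // x ∈ s} → ℂ := fun a => if a = (⟨a0, ha0s⟩ : {x // x ∈ s}) then (x0 : ℂ) else ↑a
      with hy'def
    have heq : (fun a : {x // x ∈ s} => algebraMap AlgNum ℂ (cc a) * ↑a) = y' := by
      funext a
      show algebraMap AlgNum ℂ (if a = (⟨a0, ha0s⟩ : {x // x ∈ s}) then c else 1) * ↑a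
          = (if a = (⟨a0, ha0s⟩ : {x // x ∈ s}) then (x0 : ℂ) else ↑a)
      by_cases hh : a = (⟨a0, ha0s⟩ : {x // x ∈ s})
      · rw [if_pos hh, if_pos hh, hh]
        show (v k)⁻¹ * a0 = (x0 : ℂ)
        rw [ha0z, hz]
        exact inv_mul_cancel_left₀ (hv0 k) _
      · rw [if_neg hh, if_neg hh, map_one, one_mul]
    rw [heq] at hscaled
    -- build θ
    have hmem'' : ∀ i : Fin n, i ≠ i0 → Complex.exp (z i) ∈ s :=
      fun i hi => Finset.mem_of_mem_erase (hmem' i hi)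
    let θ : {i : Option (Fin n) // i ≠ some i0} → {x // x ∈ s} := fun x =>
      match x with
      | ⟨none, _⟩ => ⟨a0, ha0s⟩
      | ⟨some i, hx⟩ => ⟨Complex.exp (z i), hmem'' i (fun h => hx (by rw [h]))⟩
    have ha0ne : ∀ i (hi : i ≠ i0), (⟨Complex.exp (z i), hmem'' i hi⟩ : {x // x ∈ s})
        ≠ ⟨a0, ha0s⟩ := by
      intro i hi hcon
      have : Complex.exp (z i) = a0 := congrArg Subtype.val hcon
      have h2 := hmem' i hi
      rw [this] at h2
      exact Finset.notMem_erase a0 s h2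
    have θinj : Function.Injective θ := by
      rintro ⟨o1, h1⟩ ⟨o2, h2⟩ hxy
      cases o1 with
      | none =>
        cases o2 with
        | none => rfl
        | some i' =>
          exact absurd hxy.symm (ha0ne i' (fun h => h2 (by rw [h])))
      | some i =>
        cases o2 with
        | none => exact absurd hxy (ha0ne i (fun h => h1 (by rw [h])))
        | some i' =>
          have hii0 : i ≠ i0 := fun h => h1 (by rw [h])
          have hii0' : i' ≠ i0 := fun h => h2 (by rw [h])
          have : Complex.exp (z i) = Complex.exp (z i') := congrArg Subtype.val hxy
          exact Subtype.ext (congrArg some (hexpinj' i i' hii0 hii0' this))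
    have hfinal := hscaled.comp θ θinj
    have hco : (y' ∘ θ) = fun x : {i : Option (Fin n) // i ≠ some i0} => w ↑x := by
      funext x
      rcases x with ⟨o, ho⟩
      cases o with
      | none =>
        show (if (⟨a0, ha0s⟩ : {x // x ∈ s}) = ⟨a0, ha0s⟩ then (x0 : ℂ) else ↑a0) = (x0 : ℂ)
        rw [if_pos rfl]
      | some i =>
        have hii0 : i ≠ i0 := fun h => ho (by rw [h])
        show (if (⟨Complex.exp (z i), hmem'' i hii0⟩ : {x // x ∈ s}) = ⟨a0, ha0s⟩
            then (x0 : ℂ) else Complex.exp (z i)) = w (some i)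
        rw [if_neg (ha0ne i hii0)]
        rfl
    rw [hco] at hfinal
    exact elim_var hcop hw1 hw2 (some i0) hfinal
end

section
/- With the Taylor-substitution setup: let T > 0, let f ∈ ℝ[X, Y_1, …, Y_t], let trans_1, …, trans_t : ℝ → ℝ be regularly expandable on (0,T] with thresholds n_1, …, n_t, set n* = max(n_1, …, n_t), and let F(x) = f(x, trans_1(x), …, trans_t(x)). Then for all real numbers a, b with 0 < a < b ≤ T: F(x) > 0 for all x ∈ [a,b] if and only if there exists n ≥ n* such that the polynomial Tmin(n,F) satisfies Tmin(n,F)(x) > 0 for all x ∈ [a,b]. -/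
/-- `taylorPoly a m n` is the polynomial `Σ_{i=1}^{n} (-1)^{i-1} aᵢ X^{mᵢ}`,
the sum of the first `n` terms of the alternating series with coefficients `a`
and exponents `m` (indexed from `1`). -/
noncomputable def taylorPoly (a : ℕ → ℝ) (m : ℕ → ℕ) (n : ℕ) : Polynomial ℝ :=
  ∑ i ∈ Finset.range n, Polynomial.C ((-1 : ℝ) ^ i * a (i + 1)) * Polynomial.X ^ (m (i + 1))

/-- `g : ℝ → ℝ` is regularly expandable on `(0, T]` with threshold `n0`, witnessed by
coefficients `a i ∈ (0,1]` and strictly increasing exponents `m` (indexed from `1`):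
the alternating series `Σ (-1)^{i-1} aᵢ x^{mᵢ}` converges to `g x` on `[0,T]`,
`g > 0` on `(0,T]`, and for `n ≥ n0` and `x ∈ (0,T]` the partial sum `taylor(g,n)(x)`
is positive and `aₙ x^{mₙ} > a_{n+1} x^{m_{n+1}} > 0`. -/
structure RegExpand (g : ℝ → ℝ) (T : ℝ) (n0 : ℕ) where
  a : ℕ → ℝ
  m : ℕ → ℕ
  a_pos : ∀ i, 1 ≤ i → 0 < a i
  a_le_one : ∀ i, 1 ≤ i → a i ≤ 1
  m_mono : ∀ i, 1 ≤ i → m i < m (i + 1)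
  converges : ∀ x ∈ Set.Icc (0 : ℝ) T,
    Filter.Tendsto (fun N => (taylorPoly a m N).eval x) Filter.atTop (nhds (g x))
  g_pos : ∀ x ∈ Set.Ioc (0 : ℝ) T, 0 < g x
  taylor_pos : ∀ n, n0 ≤ n → ∀ x ∈ Set.Ioc (0 : ℝ) T, 0 < (taylorPoly a m n).eval x
  terms_dec : ∀ n, n0 ≤ n → ∀ x ∈ Set.Ioc (0 : ℝ) T,
    a (n + 1) * x ^ m (n + 1) < a n * x ^ m n ∧ 0 < a (n + 1) * x ^ m (n + 1)

/-- `Tmin fplus fminus a m n` is the lower limit polynomial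
`Tmin(n,F) = f⁺(X, taylor(trans₁,2n), …) + f⁻(X, taylor(trans₁,2n-1), …)`. -/
noncomputable def Tmin {t : ℕ} (fplus fminus : MvPolynomial (Option (Fin t)) ℝ)
    (a : Fin t → ℕ → ℝ) (m : Fin t → ℕ → ℕ) (n : ℕ) : Polynomial ℝ :=
  MvPolynomial.aeval
      (fun o => Option.elim o Polynomial.X (fun k => taylorPoly (a k) (m k) (2 * n))) fplus +
    MvPolynomial.aeval
      (fun o => Option.elim o Polynomial.X (fun k => taylorPoly (a k) (m k) (2 * n - 1))) fminus

/-- `Tmax fplus fminus a m n` is the upper limit polynomial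
`Tmax(n,F) = f⁺(X, taylor(trans₁,2n-1), …) + f⁻(X, taylor(trans₁,2n), …)`. -/
noncomputable def Tmax {t : ℕ} (fplus fminus : MvPolynomial (Option (Fin t)) ℝ)
    (a : Fin t → ℕ → ℝ) (m : Fin t → ℕ → ℕ) (n : ℕ) : Polynomial ℝ :=
  MvPolynomial.aeval
      (fun o => Option.elim o Polynomial.X (fun k => taylorPoly (a k) (m k) (2 * n - 1))) fplus +
    MvPolynomial.aeval
      (fun o => Option.elim o Polynomial.X (fun k => taylorPoly (a k) (m k) (2 * n))) fminus

open Filter Polynomial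

lemma taylorPoly_eval_succ (a : ℕ → ℝ) (m : ℕ → ℕ) (N : ℕ) (x : ℝ) :
    (taylorPoly a m (N+1)).eval x
      = (taylorPoly a m N).eval x + (-1 : ℝ)^N * (a (N+1) * x ^ m (N+1)) := by
  simp [taylorPoly, Finset.sum_range_succ, mul_assoc]

section AltSeq

variable (s c : ℕ → ℝ) (n0 : ℕ)
    (hstep : ∀ N, s (N+1) = s N + (-1 : ℝ)^N * c (N+1))
    (hc : ∀ n, n0 ≤ n → c (n+1) < c n ∧ 0 < c (n+1))

include hstep hc

lemma alt_step2_even (N : ℕ) (hN : n0 ≤ N) (he : Even N) : s N ≤ s (N+2) := by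
  have h1 := hstep N
  have h2 := hstep (N+1)
  have hp : (-1 : ℝ)^N = 1 := he.neg_one_pow
  have hp2 : (-1 : ℝ)^(N+1) = -1 := (Even.add_one he).neg_one_pow
  have hcc := hc (N+1) (by omega)
  rw [hp] at h1; rw [hp2] at h2
  nlinarith [hcc.1, hcc.2]

lemma alt_step2_odd (N : ℕ) (hN : n0 ≤ N) (ho : Odd N) : s (N+2) ≤ s N := by
  have h1 := hstep N
  have h2 := hstep (N+1)
  have hp : (-1 : ℝ)^N = -1 := ho.neg_one_pow
  have hp2 : (-1 : ℝ)^(N+1) = 1 := (Odd.add_one ho).neg_one_pow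
  have hcc := hc (N+1) (by omega)
  rw [hp] at h1; rw [hp2] at h2
  nlinarith [hcc.1, hcc.2]

lemma alt_even_mono_aux (N : ℕ) (hN : n0 ≤ N) (he : Even N) :
    ∀ j, s N ≤ s (N + 2*j) := by
  intro j
  induction j with
  | zero => simp
  | succ j ih =>
      refine le_trans ih ?_
      have : N + 2*(j+1) = (N + 2*j) + 2 := by ring
      rw [this]
      exact alt_step2_even s c n0 hstep hc (N + 2*j) (by omega)
        (by obtain ⟨r, hr⟩ := he; exact ⟨r + j, by omega⟩)

lemma alt_odd_anti_aux (N : ℕ) (hN : n0 ≤ N) (ho : Odd N) :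
    ∀ j, s (N + 2*j) ≤ s N := by
  intro j
  induction j with
  | zero => simp
  | succ j ih =>
      refine le_trans ?_ ih
      have : N + 2*(j+1) = (N + 2*j) + 2 := by ring
      rw [this]
      exact alt_step2_odd s c n0 hstep hc (N + 2*j) (by omega)
        (by obtain ⟨r, hr⟩ := ho; exact ⟨r + j, by omega⟩)

lemma alt_even_mono (N N' : ℕ) (hN : n0 ≤ N) (hNN' : N ≤ N')
    (he : Even N) (he' : Even N') : s N ≤ s N' := by
  obtain ⟨r, hr⟩ := he
  obtain ⟨r', hr'⟩ := he'
  have : N' = N + 2*(r' - r) := by omega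
  rw [this]
  exact alt_even_mono_aux s c n0 hstep hc N hN ⟨r, hr⟩ _

lemma alt_odd_anti (N N' : ℕ) (hN : n0 ≤ N) (hNN' : N ≤ N')
    (ho : Odd N) (ho' : Odd N') : s N' ≤ s N := by
  obtain ⟨r, hr⟩ := ho
  obtain ⟨r', hr'⟩ := ho'
  have : N' = N + 2*(r' - r) := by omega
  rw [this]
  exact alt_odd_anti_aux s c n0 hstep hc N hN ⟨r, hr⟩ _

lemma alt_even_le {L : ℝ} (hL : Tendsto s atTop (nhds L))
    (N : ℕ) (hN : n0 ≤ N) (he : Even N) : s N ≤ L := by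
  have ht : Tendsto (fun j => N + 2*j) atTop atTop :=
    tendsto_atTop_mono (fun j => by simp only [id_eq]; omega) tendsto_id
  refine ge_of_tendsto (hL.comp ht) (Eventually.of_forall fun j => ?_)
  exact alt_even_mono_aux s c n0 hstep hc N hN he j

lemma alt_le_odd {L : ℝ} (hL : Tendsto s atTop (nhds L))
    (N : ℕ) (hN : n0 ≤ N) (ho : Odd N) : L ≤ s N := by
  have ht : Tendsto (fun j => N + 2*j) atTop atTop :=
    tendsto_atTop_mono (fun j => by simp only [id_eq]; omega) tendsto_id
  refine le_of_tendsto (hL.comp ht) (Eventually.of_forall fun j => ?_)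
  exact alt_odd_anti_aux s c n0 hstep hc N hN ho j

end AltSeq

lemma mv_eval_mono {σ : Type*} (p : MvPolynomial σ ℝ) (hp : ∀ d, 0 ≤ p.coeff d)
    (y y' : σ → ℝ) (h0 : ∀ i, 0 ≤ y i) (h : ∀ i, y i ≤ y' i) :
    MvPolynomial.eval y p ≤ MvPolynomial.eval y' p := by
  rw [MvPolynomial.eval_eq, MvPolynomial.eval_eq]
  refine Finset.sum_le_sum fun d _ => ?_
  refine mul_le_mul_of_nonneg_left ?_ (hp d)
  refine Finset.prod_le_prod (fun i _ => pow_nonneg (h0 i) _)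
    (fun i _ => pow_le_pow_left₀ (h0 i) (h i) _)

lemma mv_eval_tendsto {σ : Type*} (p : MvPolynomial σ ℝ) (y : ℕ → σ → ℝ) (Y : σ → ℝ)
    (h : ∀ i, Tendsto (fun n => y n i) atTop (nhds (Y i))) :
    Tendsto (fun n => MvPolynomial.eval (y n) p) atTop (nhds (MvPolynomial.eval Y p)) := by
  induction p using MvPolynomial.induction_on with
  | C c => simpa using tendsto_const_nhds
  | add p q hp hq => simpa [map_add] using hp.add hq
  | mul_X p i hp => simpa [map_mul] using hp.mul (h i)

lemma eval_aeval_poly {σ : Type*} (p : MvPolynomial σ ℝ) (g : σ → Polynomial ℝ) (x : ℝ) :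
    (MvPolynomial.aeval g p).eval x = MvPolynomial.eval (fun i => (g i).eval x) p := by
  induction p using MvPolynomial.induction_on with
  | C c => simp
  | add p q hp hq => simp [hp, hq]
  | mul_X p i hp => simp [hp]

/-- with the Taylor-substitution setup, for `0 < a < b ≤ T`,
`F > 0` on `[a,b]` iff for some `n ≥ n* = max(n₁,…,n_t)` the lower limit polynomial
`Tmin(n,F)` is positive on `[a,b]`. -/
theorem stmt_12 (T : ℝ) (hT : 0 < T) (t : ℕ)
    (f fplus fminus : MvPolynomial (Option (Fin t)) ℝ)
    (hplus : ∀ mo : Option (Fin t) →₀ ℕ,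
      MvPolynomial.coeff mo fplus =
        if 0 < MvPolynomial.coeff mo f then MvPolynomial.coeff mo f else 0)
    (hminus : ∀ mo : Option (Fin t) →₀ ℕ,
      MvPolynomial.coeff mo fminus =
        if MvPolynomial.coeff mo f < 0 then MvPolynomial.coeff mo f else 0)
    (trans : Fin t → ℝ → ℝ) (nth : Fin t → ℕ)
    (E : ∀ k, RegExpand (trans k) T (nth k))
    (F : ℝ → ℝ)
    (hF : ∀ x : ℝ, F x =
      MvPolynomial.eval (fun o => Option.elim o x (fun k => trans k x)) f)
    (a b : ℝ) (ha : 0 < a) (hab : a < b) (hbT : b ≤ T) :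
    (∀ x ∈ Set.Icc a b, 0 < F x) ↔
      ∃ n, Finset.univ.sup nth ≤ n ∧
        ∀ x ∈ Set.Icc a b,
          0 < (Tmin fplus fminus (fun k => (E k).a) (fun k => (E k).m) n).eval x := by
  set A : Fin t → ℕ → ℝ := fun k => (E k).a with hA
  set M : Fin t → ℕ → ℕ := fun k => (E k).m with hM
  -- coefficient facts
  have hfp : ∀ d, 0 ≤ fplus.coeff d := by
    intro d; rw [hplus]; split <;> [linarith; exact le_refl 0]
  have hfm : ∀ d, 0 ≤ (-fminus).coeff d := by
    intro d; rw [MvPolynomial.coeff_neg, hminus]; split <;> [linarith; simp]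
  have hsum : fplus + fminus = f := by
    apply MvPolynomial.ext
    intro d
    rw [MvPolynomial.coeff_add, hplus, hminus]
    rcases lt_trichotomy (MvPolynomial.coeff d f) 0 with h | h | h
    · rw [if_neg (by linarith), if_pos h]; ring
    · rw [if_neg (by linarith), if_neg (by linarith)]; simp [h]
    · rw [if_pos h, if_neg (by linarith)]; ring
  -- threshold positivity
  have hnth1 : ∀ k : Fin t, 1 ≤ nth k := by
    intro k
    by_contra h
    have h0 : nth k = 0 := by omega
    have := (E k).taylor_pos 0 (by omega) T ⟨hT, le_refl T⟩
    simp [taylorPoly] at this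
  -- evaluation of Tmin
  have hTmin_eval : ∀ n (x : ℝ),
      (Tmin fplus fminus A M n).eval x =
        MvPolynomial.eval
          (fun o => Option.elim o x (fun k => (taylorPoly (A k) (M k) (2*n)).eval x)) fplus +
        MvPolynomial.eval
          (fun o => Option.elim o x (fun k => (taylorPoly (A k) (M k) (2*n-1)).eval x)) fminus := by
    intro n x
    simp only [Tmin, Polynomial.eval_add, eval_aeval_poly]
    congr 1
    · exact congrArg (fun y => MvPolynomial.eval y fplus)
        (funext fun o => by cases o <;> simp)
    · exact congrArg (fun y => MvPolynomial.eval y fminus)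
        (funext fun o => by cases o <;> simp)
  -- F decomposition
  have hFeq : ∀ x : ℝ, F x =
      MvPolynomial.eval (fun o => Option.elim o x (fun k => trans k x)) fplus +
      MvPolynomial.eval (fun o => Option.elim o x (fun k => trans k x)) fminus := by
    intro x
    rw [hF x, ← hsum, map_add]
  -- per-k facts
  have hstep : ∀ (k : Fin t) (x : ℝ) (N : ℕ),
      (taylorPoly (A k) (M k) (N+1)).eval x
        = (taylorPoly (A k) (M k) N).eval x + (-1:ℝ)^N * (A k (N+1) * x ^ M k (N+1)) :=
    fun k x N => taylorPoly_eval_succ (A k) (M k) N x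
  have hdec : ∀ (k : Fin t), ∀ x ∈ Set.Ioc (0:ℝ) T, ∀ n, nth k ≤ n →
      A k (n+1) * x ^ M k (n+1) < A k n * x ^ M k n ∧ 0 < A k (n+1) * x ^ M k (n+1) :=
    fun k x hx n hn => (E k).terms_dec n hn x hx
  have hconv : ∀ (k : Fin t), ∀ x ∈ Set.Icc (0:ℝ) T,
      Tendsto (fun N => (taylorPoly (A k) (M k) N).eval x) atTop (nhds (trans k x)) :=
    fun k x hx => (E k).converges x hx
  have hIoc : ∀ x ∈ Set.Icc a b, x ∈ Set.Ioc (0:ℝ) T :=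
    fun x hx => ⟨lt_of_lt_of_le ha hx.1, le_trans hx.2 hbT⟩
  have hIcc : ∀ x ∈ Set.Icc a b, x ∈ Set.Icc (0:ℝ) T :=
    fun x hx => ⟨le_of_lt (lt_of_lt_of_le ha hx.1), le_trans hx.2 hbT⟩
  -- lower/upper bounds
  have hlo : ∀ (k : Fin t) (n : ℕ), nth k ≤ n → ∀ x ∈ Set.Ioc (0:ℝ) T,
      (taylorPoly (A k) (M k) (2*n)).eval x ≤ trans k x := by
    intro k n hn x hx
    exact alt_even_le _ (fun i => A k i * x ^ M k i) (nth k) (hstep k x) (hdec k x hx)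
      (hconv k x ⟨le_of_lt hx.1, hx.2⟩) (2*n) (by omega) ⟨n, by ring⟩
  have hhi : ∀ (k : Fin t) (n : ℕ), nth k ≤ n → ∀ x ∈ Set.Ioc (0:ℝ) T,
      trans k x ≤ (taylorPoly (A k) (M k) (2*n-1)).eval x := by
    intro k n hn x hx
    have h1 : 1 ≤ n := le_trans (hnth1 k) hn
    exact alt_le_odd _ (fun i => A k i * x ^ M k i) (nth k) (hstep k x) (hdec k x hx)
      (hconv k x ⟨le_of_lt hx.1, hx.2⟩) (2*n-1) (by omega) ⟨n-1, by omega⟩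
  have hEvMono : ∀ (k : Fin t) (n n' : ℕ), nth k ≤ n → n ≤ n' → ∀ x ∈ Set.Ioc (0:ℝ) T,
      (taylorPoly (A k) (M k) (2*n)).eval x ≤ (taylorPoly (A k) (M k) (2*n')).eval x := by
    intro k n n' hn hnn' x hx
    exact alt_even_mono (fun N => (taylorPoly (A k) (M k) N).eval x) (fun i => A k i * x ^ M k i) (nth k) (hstep k x) (hdec k x hx) (2*n) (2*n')
      (by omega) (by omega) ⟨n, by ring⟩ ⟨n', by ring⟩
  have hOdAnti : ∀ (k : Fin t) (n n' : ℕ), nth k ≤ n → n ≤ n' → ∀ x ∈ Set.Ioc (0:ℝ) T,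
      (taylorPoly (A k) (M k) (2*n'-1)).eval x ≤ (taylorPoly (A k) (M k) (2*n-1)).eval x := by
    intro k n n' hn hnn' x hx
    have h1 : 1 ≤ n := le_trans (hnth1 k) hn
    exact alt_odd_anti (fun N => (taylorPoly (A k) (M k) N).eval x) (fun i => A k i * x ^ M k i) (nth k) (hstep k x) (hdec k x hx) (2*n-1) (2*n'-1)
      (by omega) (by omega) ⟨n-1, by omega⟩ ⟨n'-1, by omega⟩
  have hposEv : ∀ (k : Fin t) (n : ℕ), nth k ≤ n → ∀ x ∈ Set.Ioc (0:ℝ) T,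
      0 < (taylorPoly (A k) (M k) (2*n)).eval x :=
    fun k n hn x hx => (E k).taylor_pos (2*n) (by omega) x hx
  have hposOd : ∀ (k : Fin t) (n : ℕ), nth k ≤ n → ∀ x ∈ Set.Ioc (0:ℝ) T,
      0 < (taylorPoly (A k) (M k) (2*n-1)).eval x := by
    intro k n hn x hx
    have h1 : 1 ≤ n := le_trans (hnth1 k) hn
    exact (E k).taylor_pos (2*n-1) (by omega) x hx
  -- Tmin ≤ F on (0,T]
  have hTminF : ∀ (n : ℕ), Finset.univ.sup nth ≤ n → ∀ x ∈ Set.Ioc (0:ℝ) T,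
      (Tmin fplus fminus A M n).eval x ≤ F x := by
    intro n hn x hx
    have hk : ∀ k : Fin t, nth k ≤ n := fun k => le_trans (Finset.le_sup (Finset.mem_univ k)) hn
    rw [hTmin_eval, hFeq]
    have h1 : MvPolynomial.eval
        (fun o => Option.elim o x (fun k => (taylorPoly (A k) (M k) (2*n)).eval x)) fplus
        ≤ MvPolynomial.eval (fun o => Option.elim o x (fun k => trans k x)) fplus := by
      refine mv_eval_mono fplus hfp _ _ (fun o => ?_) (fun o => ?_)
      · cases o with
        | none => exact le_of_lt hx.1
        | some k => exact le_of_lt (hposEv k n (hk k) x hx)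
      · cases o with
        | none => exact le_refl x
        | some k => exact hlo k n (hk k) x hx
    have h2 : MvPolynomial.eval
        (fun o => Option.elim o x (fun k => (taylorPoly (A k) (M k) (2*n-1)).eval x)) fminus
        ≤ MvPolynomial.eval (fun o => Option.elim o x (fun k => trans k x)) fminus := by
      have := mv_eval_mono (-fminus) hfm
        (fun o => Option.elim o x (fun k => trans k x))
        (fun o => Option.elim o x (fun k => (taylorPoly (A k) (M k) (2*n-1)).eval x))
        (fun o => ?_) (fun o => ?_)
      · simp only [map_neg] at this; linarith
      · cases o with
        | none => exact le_of_lt hx.1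
        | some k => exact le_of_lt ((E k).g_pos x hx)
      · cases o with
        | none => exact le_refl x
        | some k => exact hhi k n (hk k) x hx
    exact add_le_add h1 h2
  -- Tmin monotone in n
  have hTminMono : ∀ (n n' : ℕ), Finset.univ.sup nth ≤ n → n ≤ n' → ∀ x ∈ Set.Ioc (0:ℝ) T,
      (Tmin fplus fminus A M n).eval x ≤ (Tmin fplus fminus A M n').eval x := by
    intro n n' hn hnn' x hx
    have hk : ∀ k : Fin t, nth k ≤ n := fun k => le_trans (Finset.le_sup (Finset.mem_univ k)) hn
    rw [hTmin_eval, hTmin_eval]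
    have h1 : MvPolynomial.eval
        (fun o => Option.elim o x (fun k => (taylorPoly (A k) (M k) (2*n)).eval x)) fplus
        ≤ MvPolynomial.eval
        (fun o => Option.elim o x (fun k => (taylorPoly (A k) (M k) (2*n')).eval x)) fplus := by
      refine mv_eval_mono fplus hfp _ _ (fun o => ?_) (fun o => ?_)
      · cases o with
        | none => exact le_of_lt hx.1
        | some k => exact le_of_lt (hposEv k n (hk k) x hx)
      · cases o with
        | none => exact le_refl x
        | some k => exact hEvMono k n n' (hk k) hnn' x hx
    have h2 : MvPolynomial.eval
        (fun o => Option.elim o x (fun k => (taylorPoly (A k) (M k) (2*n-1)).eval x)) fminus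
        ≤ MvPolynomial.eval
        (fun o => Option.elim o x (fun k => (taylorPoly (A k) (M k) (2*n'-1)).eval x)) fminus := by
      have := mv_eval_mono (-fminus) hfm
        (fun o => Option.elim o x (fun k => (taylorPoly (A k) (M k) (2*n'-1)).eval x))
        (fun o => Option.elim o x (fun k => (taylorPoly (A k) (M k) (2*n-1)).eval x))
        (fun o => ?_) (fun o => ?_)
      · simp only [map_neg] at this; linarith
      · cases o with
        | none => exact le_of_lt hx.1
        | some k => exact le_of_lt (hposOd k n' (le_trans (hk k) hnn') x hx)
      · cases o with
        | none => exact le_refl x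
        | some k => exact hOdAnti k n n' (hk k) hnn' x hx
    exact add_le_add h1 h2
  constructor
  · -- forward direction, by contradiction
    intro hFpos
    by_contra hcon
    push_neg at hcon
    have hchoice : ∀ j : ℕ, ∃ x ∈ Set.Icc a b,
        (Tmin fplus fminus A M (max j (Finset.univ.sup nth))).eval x ≤ 0 :=
      fun j => hcon (max j (Finset.univ.sup nth)) (le_max_right _ _)
    choose xs hxs hxs0 using hchoice
    obtain ⟨x0, hx0mem, φ, hφ, hlim⟩ := (isCompact_Icc).tendsto_subseq hxs
    have hx0Ioc : x0 ∈ Set.Ioc (0:ℝ) T := hIoc x0 hx0mem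
    have hx0Icc : x0 ∈ Set.Icc (0:ℝ) T := hIcc x0 hx0mem
    -- every Tmin(n) is ≤ 0 at x0
    have key : ∀ n, Finset.univ.sup nth ≤ n → (Tmin fplus fminus A M n).eval x0 ≤ 0 := by
      intro n hn
      have hcont : Tendsto (fun j => (Tmin fplus fminus A M n).eval (xs (φ j))) atTop
          (nhds ((Tmin fplus fminus A M n).eval x0)) :=
        ((Tmin fplus fminus A M n).continuous_aeval.tendsto x0).comp hlim
      refine le_of_tendsto hcont ?_
      filter_upwards [eventually_ge_atTop n] with j hj
      have hφj : n ≤ max (φ j) (Finset.univ.sup nth) :=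
        le_trans (le_trans hj (hφ.le_apply)) (le_max_left _ _)
      exact le_trans
        (hTminMono n _ hn hφj (xs (φ j)) (hIoc _ (hxs (φ j))))
        (hxs0 (φ j))
    -- Tmin(n)(x0) → F(x0)
    have hlim2 : Tendsto (fun n => (Tmin fplus fminus A M n).eval x0) atTop (nhds (F x0)) := by
      rw [hFeq x0]
      have heq : (fun n => (Tmin fplus fminus A M n).eval x0)
          = fun n =>
            MvPolynomial.eval
              (fun o => Option.elim o x0 (fun k => (taylorPoly (A k) (M k) (2*n)).eval x0)) fplus +
            MvPolynomial.eval
              (fun o => Option.elim o x0 (fun k => (taylorPoly (A k) (M k) (2*n-1)).eval x0)) fminus := by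
        funext n; exact hTmin_eval n x0
      rw [heq]
      refine Tendsto.add ?_ ?_
      · refine mv_eval_tendsto fplus _ _ (fun o => ?_)
        cases o with
        | none => exact tendsto_const_nhds
        | some k =>
            exact (hconv k x0 hx0Icc).comp
              (tendsto_atTop_mono (fun n => by simp only [id_eq]; omega) tendsto_id)
      · refine mv_eval_tendsto fminus _ _ (fun o => ?_)
        cases o with
        | none => exact tendsto_const_nhds
        | some k =>
            exact (hconv k x0 hx0Icc).comp
              (tendsto_atTop_mono (fun n => by simp only [id_eq]; omega) tendsto_id)
    have hF0 : F x0 ≤ 0 := by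
      refine le_of_tendsto hlim2 ?_
      filter_upwards [eventually_ge_atTop (Finset.univ.sup nth)] with n hn
      exact key n hn
    exact absurd (hFpos x0 hx0mem) (not_lt.2 hF0)
  · rintro ⟨n, hn, hpos⟩ x hx
    exact lt_of_lt_of_le (hpos x hx) (hTminF n hn x (hIoc x hx))
end

section
/- With the Taylor-substitution setup: let T > 0, let f ∈ ℝ[X, Y_1, …, Y_t], let trans_1, …, trans_t : ℝ → ℝ be regularly expandable on (0,T] with thresholds n_1, …, n_t, set n* = max(n_1, …, n_t), and let F(x) = f(x, trans_1(x), …, trans_t(x)). Then F(x) > 0 for all x ∈ (0,T] if and only if there exists n ≥ n* such that the polynomial Tmin(n,F) satisfies Tmin(n,F)(x) > 0 for all x ∈ (0,T]. -/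
set_option linter.unusedSectionVars false

namespace Stmt15Aux
open Polynomial Filter Set

lemma taylor_eval (a : ℕ → ℝ) (m : ℕ → ℕ) (N : ℕ) (x : ℝ) :
    (taylorPoly a m N).eval x = ∑ i ∈ Finset.range N, (-1:ℝ)^i * a (i+1) * x ^ (m (i+1)) := by
  simp only [taylorPoly, Polynomial.eval_finset_sum, Polynomial.eval_mul, Polynomial.eval_C,
    Polynomial.eval_pow, Polynomial.eval_X]

lemma m_lower {m : ℕ → ℕ} (hm : ∀ i, 1 ≤ i → m i < m (i+1)) : ∀ i, i ≤ m (i+1) := by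
  intro i
  induction i with
  | zero => exact Nat.zero_le _
  | succ k ih => exact Nat.lt_of_le_of_lt ih (hm (k+1) (Nat.succ_le_succ (Nat.zero_le _)))

lemma taylor_sub_dvd_aux {m : ℕ → ℕ} (hm : ∀ i, 1 ≤ i → m i < m (i+1)) (a : ℕ → ℝ)
    {s N N' : ℕ} (hs : s ≤ N') (h : N' ≤ N) :
    (Polynomial.X : ℝ[X])^s ∣ taylorPoly a m N - taylorPoly a m N' := by
  have : taylorPoly a m N - taylorPoly a m N'
      = ∑ i ∈ Finset.Ico N' N, Polynomial.C ((-1 : ℝ) ^ i * a (i + 1)) * Polynomial.X ^ (m (i + 1)) := by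
    rw [taylorPoly, taylorPoly, Finset.sum_Ico_eq_sub _ h]
  rw [this]
  refine Finset.dvd_sum fun i hi => ?_
  refine Dvd.dvd.mul_left (pow_dvd_pow _ ?_) _
  have := m_lower hm i
  have := (Finset.mem_Ico.1 hi).1
  omega

lemma taylor_sub_dvd {m : ℕ → ℕ} (hm : ∀ i, 1 ≤ i → m i < m (i+1)) (a : ℕ → ℝ)
    {s N N' : ℕ} (hs : s ≤ N) (hs' : s ≤ N') :
    (Polynomial.X : ℝ[X])^s ∣ taylorPoly a m N - taylorPoly a m N' := by
  rcases le_total N' N with h | h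
  · exact taylor_sub_dvd_aux hm a hs' h
  · have := taylor_sub_dvd_aux hm a hs h
    simpa using this.neg_right

lemma aeval_sub_dvd {σ : Type*} (p q : σ → ℝ[X]) {s : ℕ}
    (h : ∀ o, (Polynomial.X : ℝ[X])^s ∣ p o - q o) (f : MvPolynomial σ ℝ) :
    (Polynomial.X : ℝ[X])^s ∣ MvPolynomial.aeval p f - MvPolynomial.aeval q f := by
  induction f using MvPolynomial.induction_on with
  | C c => simp
  | add f g hf hg => simpa [mul_add, add_sub_add_comm] using dvd_add hf hg
  | mul_X f i hf =>
      have : MvPolynomial.aeval p (f * MvPolynomial.X i) - MvPolynomial.aeval q (f * MvPolynomial.X i)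
          = MvPolynomial.aeval p f * (p i - q i)
            + (MvPolynomial.aeval p f - MvPolynomial.aeval q f) * q i := by
        simp only [map_mul, MvPolynomial.aeval_X]
        ring
      rw [this]
      exact dvd_add (Dvd.dvd.mul_left (h i) _) (Dvd.dvd.mul_right hf _)

lemma mv_eval_le {σ : Type*} (f : MvPolynomial σ ℝ) (hf : ∀ d, 0 ≤ f.coeff d)
    (p q : σ → ℝ) (hp : ∀ o, 0 ≤ p o) (hpq : ∀ o, p o ≤ q o) :
    MvPolynomial.eval p f ≤ MvPolynomial.eval q f := by
  rw [MvPolynomial.eval_eq, MvPolynomial.eval_eq]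
  refine Finset.sum_le_sum fun d _ => ?_
  refine mul_le_mul_of_nonneg_left ?_ (hf d)
  refine Finset.prod_le_prod (fun i _ => pow_nonneg (hp i) _) (fun i _ => ?_)
  exact pow_le_pow_left₀ (hp i) (hpq i) _

lemma mv_eval_nonneg {σ : Type*} (f : MvPolynomial σ ℝ) (hf : ∀ d, 0 ≤ f.coeff d)
    (p : σ → ℝ) (hp : ∀ o, 0 ≤ p o) : 0 ≤ MvPolynomial.eval p f := by
  rw [MvPolynomial.eval_eq]
  refine Finset.sum_nonneg fun d _ => mul_nonneg (hf d) ?_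
  exact Finset.prod_nonneg fun i _ => pow_nonneg (hp i) _

lemma polyeval_aeval {σ : Type*} (f : MvPolynomial σ ℝ) (p : σ → ℝ[X]) (x : ℝ) :
    (MvPolynomial.aeval p f).eval x = MvPolynomial.eval (fun o => (p o).eval x) f := by
  induction f using MvPolynomial.induction_on with
  | C c => simp [MvPolynomial.algebraMap_eq]
  | add f g hf hg => simp [hf, hg]
  | mul_X f i hf => simp [hf]

lemma tendsto_mv_eval {σ : Type*} [Fintype σ] (f : MvPolynomial σ ℝ) (v : ℕ → σ → ℝ) (w : σ → ℝ)
    (h : ∀ o, Tendsto (fun n => v n o) atTop (nhds (w o))) :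
    Tendsto (fun n => MvPolynomial.eval (v n) f) atTop (nhds (MvPolynomial.eval w f)) := by
  have hv : Tendsto v atTop (nhds w) := tendsto_pi_nhds.2 h
  exact (MvPolynomial.continuous_eval (p := f)).continuousAt.tendsto.comp hv

end Stmt15Aux

namespace Stmt15Aux
open Polynomial Filter Set

variable {g : ℝ → ℝ} {T : ℝ} {n0 : ℕ}

lemma one_le_threshold (E : RegExpand g T n0) (hT : 0 < T) : 1 ≤ n0 := by
  by_contra h
  have h0 : n0 = 0 := by omega
  have := E.taylor_pos 0 (by omega) T ⟨hT, le_rfl⟩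
  simp [taylorPoly] at this

lemma step_eq (a : ℕ → ℝ) (m : ℕ → ℕ) (N : ℕ) (x : ℝ) :
    (taylorPoly a m (N+2)).eval x
      = (taylorPoly a m N).eval x
        + (-1:ℝ)^N * (a (N+1) * x ^ (m (N+1)) - a (N+2) * x ^ (m (N+2))) := by
  rw [taylor_eval, taylor_eval, Finset.sum_range_succ, Finset.sum_range_succ]
  rw [pow_succ]
  ring

lemma even_step (E : RegExpand g T n0) {x : ℝ} (hx : x ∈ Set.Ioc 0 T)
    {N : ℕ} (hN : n0 ≤ N + 1) (hNe : Even N) :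
    (taylorPoly E.a E.m N).eval x ≤ (taylorPoly E.a E.m (N+2)).eval x := by
  rw [step_eq, hNe.neg_one_pow]
  have h := E.terms_dec (N+1) hN x hx
  nlinarith [h.1, h.2]

lemma odd_step (E : RegExpand g T n0) {x : ℝ} (hx : x ∈ Set.Ioc 0 T)
    {N : ℕ} (hN : n0 ≤ N + 1) (hNo : Odd N) :
    (taylorPoly E.a E.m (N+2)).eval x ≤ (taylorPoly E.a E.m N).eval x := by
  rw [step_eq, hNo.neg_one_pow]
  have h := E.terms_dec (N+1) hN x hx
  nlinarith [h.1, h.2]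

lemma sandwich_lo (E : RegExpand g T n0) {x : ℝ} (hx : x ∈ Set.Ioc 0 T)
    {n : ℕ} (hn0 : n0 ≤ n) :
    (taylorPoly E.a E.m (2*n)).eval x ≤ g x := by
  have hmono : Monotone (fun k => (taylorPoly E.a E.m (2*n + 2*k)).eval x) := by
    refine monotone_nat_of_le_succ fun k => ?_
    have : 2*n + 2*(k+1) = (2*n + 2*k) + 2 := by ring
    rw [this]
    exact even_step E hx (by omega) (by exact ⟨n + k, by ring⟩)
  have htend : Tendsto (fun k => (taylorPoly E.a E.m (2*n + 2*k)).eval x) atTop (nhds (g x)) := by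
    refine (E.converges x (Set.Ioc_subset_Icc_self hx)).comp ?_
    exact tendsto_atTop_mono (fun k => by simp only [id_eq]; omega) tendsto_id
  simpa using hmono.ge_of_tendsto htend 0

lemma sandwich_hi (E : RegExpand g T n0) {x : ℝ} (hx : x ∈ Set.Ioc 0 T)
    {n : ℕ} (hn0 : n0 ≤ n) (hn1 : 1 ≤ n) :
    g x ≤ (taylorPoly E.a E.m (2*n - 1)).eval x := by
  obtain ⟨n', rfl⟩ : ∃ n', n = n' + 1 := ⟨n - 1, by omega⟩
  have h21 : 2*(n'+1) - 1 = 2*n' + 1 := by omega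
  rw [h21]
  have hanti : Antitone (fun k => (taylorPoly E.a E.m (2*n' + 1 + 2*k)).eval x) := by
    refine antitone_nat_of_succ_le fun k => ?_
    have : 2*n' + 1 + 2*(k+1) = (2*n' + 1 + 2*k) + 2 := by ring
    rw [this]
    exact odd_step E hx (by omega) ⟨n' + k, by ring⟩
  have htend : Tendsto (fun k => (taylorPoly E.a E.m (2*n' + 1 + 2*k)).eval x) atTop (nhds (g x)) := by
    refine (E.converges x (Set.Ioc_subset_Icc_self hx)).comp ?_
    exact tendsto_atTop_mono (fun k => by simp only [id_eq]; omega) tendsto_id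
  simpa using hanti.le_of_tendsto htend 0

end Stmt15Aux

namespace Stmt15Aux
open Polynomial Filter Set

/-- coefficient bound predicate -/
def Bnd (k : ℕ) (p : ℝ[X]) : Prop := ∀ j : ℕ, |p.coeff j| ≤ ((j:ℝ)+1)^k

lemma bnd_mono {k l : ℕ} {p : ℝ[X]} (h : Bnd k p) (hkl : k ≤ l) : Bnd l p := by
  intro j
  refine (h j).trans (pow_le_pow_right₀ ?_ hkl)
  have : (0:ℝ) ≤ (j:ℝ) := Nat.cast_nonneg j
  linarith

lemma bnd_one : Bnd 0 (1 : ℝ[X]) := by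
  intro j
  rcases Nat.eq_zero_or_pos j with h | h <;>
    simp [Polynomial.coeff_one, *] <;> split <;> simp_all

lemma bnd_X : Bnd 0 (Polynomial.X : ℝ[X]) := by
  intro j
  simp only [Polynomial.coeff_X, pow_zero]
  split <;> simp

lemma bnd_mul {k l : ℕ} {p q : ℝ[X]} (hp : Bnd k p) (hq : Bnd l q) : Bnd (k + l + 1) (p * q) := by
  intro j
  rw [Polynomial.coeff_mul]
  calc |∑ x ∈ Finset.HasAntidiagonal.antidiagonal j, p.coeff x.1 * q.coeff x.2|
      ≤ ∑ x ∈ Finset.HasAntidiagonal.antidiagonal j, |p.coeff x.1 * q.coeff x.2| := Finset.abs_sum_le_sum_abs _ _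
    _ ≤ ∑ _x ∈ Finset.HasAntidiagonal.antidiagonal j, ((j:ℝ)+1)^k * ((j:ℝ)+1)^l := by
        refine Finset.sum_le_sum fun x hx => ?_
        rw [abs_mul]
        have hx1 : x.1 ≤ j := by
          have := Finset.HasAntidiagonal.mem_antidiagonal.1 hx; omega
        have hx2 : x.2 ≤ j := by
          have := Finset.HasAntidiagonal.mem_antidiagonal.1 hx; omega
        have h1 : |p.coeff x.1| ≤ ((j:ℝ)+1)^k := by
          refine (hp x.1).trans (pow_le_pow_left₀ (by positivity) ?_ _)
          have : (x.1:ℝ) ≤ (j:ℝ) := Nat.cast_le.2 hx1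
          linarith
        have h2 : |q.coeff x.2| ≤ ((j:ℝ)+1)^l := by
          refine (hq x.2).trans (pow_le_pow_left₀ (by positivity) ?_ _)
          have : (x.2:ℝ) ≤ (j:ℝ) := Nat.cast_le.2 hx2
          linarith
        exact mul_le_mul h1 h2 (abs_nonneg _) (by positivity)
    _ = ((j:ℕ)+1 : ℝ) * (((j:ℝ)+1)^k * ((j:ℝ)+1)^l) := by
        rw [Finset.sum_const, Finset.Nat.card_antidiagonal]
        push_cast
        ring
    _ ≤ ((j:ℝ)+1)^(k+l+1) := by
        push_cast
        exact le_of_eq (by rw [pow_add, pow_add, pow_one]; ring)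

lemma bnd_pow {p : ℝ[X]} (hp : Bnd 0 p) (e : ℕ) : Bnd e (p ^ e) := by
  induction e with
  | zero => simpa using bnd_one
  | succ d ih =>
      have := bnd_mul ih hp
      rw [pow_succ]
      exact bnd_mono this (by omega)

lemma bnd_prod {σ : Type*} (s : Finset σ) (q : σ → ℝ[X]) (k : σ → ℕ)
    (h : ∀ o ∈ s, Bnd (k o) (q o)) :
    Bnd (∑ o ∈ s, (k o + 1)) (∏ o ∈ s, q o) := by
  classical
  induction s using Finset.induction_on with
  | empty => simpa using bnd_one
  | insert _ _ hnot ih =>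
      rename_i a s'
      rw [Finset.prod_insert hnot, Finset.sum_insert hnot]
      have h1 := h a (Finset.mem_insert_self a s')
      have h2 := ih fun o ho => h o (Finset.mem_insert_of_mem ho)
      have := bnd_mul h1 h2
      exact bnd_mono this (by omega)

lemma bnd_taylor {a : ℕ → ℝ} {m : ℕ → ℕ} (ha : ∀ i, 1 ≤ i → 0 < a i)
    (ha1 : ∀ i, 1 ≤ i → a i ≤ 1) (hm : ∀ i, 1 ≤ i → m i < m (i+1)) (N : ℕ) :
    Bnd 0 (taylorPoly a m N) := by
  intro j
  simp only [pow_zero]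
  have hmi : StrictMono (fun i => m (i+1)) :=
    strictMono_nat_of_lt_succ fun i => hm (i+1) (by omega)
  rw [taylorPoly]
  simp only [Polynomial.finset_sum_coeff, Polynomial.coeff_C_mul, Polynomial.coeff_X_pow]
  by_cases hex : ∃ i ∈ Finset.range N, m (i+1) = j
  · obtain ⟨i0, hi0, hmi0⟩ := hex
    rw [Finset.sum_eq_single_of_mem i0 hi0 (fun i hi hne => by
      rw [if_neg (fun hh : j = m (i+1) => (Ne.symm hne) (hmi.injective (hmi0.trans hh))), mul_zero])]
    rw [if_pos hmi0.symm, mul_one, abs_mul, abs_pow, abs_neg, abs_one, one_pow, one_mul,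
      abs_of_pos (ha (i0+1) (by omega))]
    exact ha1 (i0+1) (by omega)
  · push_neg at hex
    rw [Finset.sum_eq_zero (fun i hi => by
      rw [if_neg (fun hh : j = m (i+1) => hex i hi hh.symm), mul_zero])]
    simp

end Stmt15Aux

namespace Stmt15Aux
open Polynomial Filter Set

lemma bnd_aeval {σ : Type*} (f : MvPolynomial σ ℝ) (p : σ → ℝ[X]) (hp : ∀ o, Bnd 0 (p o)) (j : ℕ) :
    |(MvPolynomial.aeval p f).coeff j|
      ≤ (∑ d ∈ f.support, |f.coeff d|)
          * ((j:ℝ)+1)^(f.support.sup fun d => ∑ o ∈ d.support, (d o + 1)) := by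
  classical
  set K := f.support.sup fun d => ∑ o ∈ d.support, (d o + 1) with hK
  rw [MvPolynomial.aeval_def, MvPolynomial.eval₂_eq]
  rw [Polynomial.finset_sum_coeff]
  calc |∑ d ∈ f.support, ((algebraMap ℝ ℝ[X]) (f.coeff d) * ∏ o ∈ d.support, p o ^ d o).coeff j|
      ≤ ∑ d ∈ f.support, |((algebraMap ℝ ℝ[X]) (f.coeff d) * ∏ o ∈ d.support, p o ^ d o).coeff j| :=
        Finset.abs_sum_le_sum_abs _ _
    _ ≤ ∑ d ∈ f.support, |f.coeff d| * ((j:ℝ)+1)^K := by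
        refine Finset.sum_le_sum fun d hd => ?_
        rw [Polynomial.algebraMap_eq, Polynomial.coeff_C_mul, abs_mul]
        refine mul_le_mul_of_nonneg_left ?_ (abs_nonneg _)
        have hprod : Bnd (∑ o ∈ d.support, (d o + 1)) (∏ o ∈ d.support, p o ^ d o) :=
          bnd_prod _ _ _ (fun o _ => bnd_pow (hp o) (d o))
        have hKle : (∑ o ∈ d.support, (d o + 1)) ≤ K := Finset.le_sup (f := fun d => ∑ o ∈ d.support, (d o + 1)) hd
        exact bnd_mono hprod hKle j
    _ = (∑ d ∈ f.support, |f.coeff d|) * ((j:ℝ)+1)^K := by rw [Finset.sum_mul]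

lemma summable_aux (K : ℕ) {x : ℝ} (hx0 : 0 < x) (hx : x < 1) :
    Summable (fun j : ℕ => ((j:ℝ)+1)^K * x^j) := by
  have h : Summable (fun n : ℕ => (n:ℝ)^K * x^n) :=
    summable_pow_mul_geometric_of_norm_lt_one K (by rw [Real.norm_eq_abs, abs_of_pos hx0]; exact hx)
  have h1 : Summable (fun n : ℕ => ((n:ℝ)+1)^K * x^(n+1)) := by
    have := (summable_nat_add_iff 1).2 h
    simpa [Nat.cast_add] using this
  have h2 := h1.mul_left x⁻¹
  refine h2.congr fun j => ?_
  rw [pow_succ]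
  field_simp

lemma eval_small {p : ℝ[X]} {C : ℝ} {K s : ℕ} (hC : 0 ≤ C)
    (hcoeff : ∀ j, |p.coeff j| ≤ C * ((j:ℝ)+1)^K) (hdvd : (Polynomial.X : ℝ[X])^s ∣ p)
    {x : ℝ} (hx0 : 0 < x) (hx : x < 1) :
    |p.eval x| ≤ C * ((s:ℝ)+1)^K * x^s * (∑' j : ℕ, ((j:ℝ)+1)^K * x^j) := by
  obtain ⟨R, rfl⟩ := hdvd
  have hRcoeff : ∀ j, |R.coeff j| ≤ C * ((s:ℝ)+1)^K * ((j:ℝ)+1)^K := by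
    intro j
    have h1 : ((Polynomial.X : ℝ[X])^s * R).coeff (j + s) = R.coeff j :=
      Polynomial.coeff_X_pow_mul R s j
    have h2 := hcoeff (j + s)
    rw [h1] at h2
    push_cast at h2
    refine h2.trans ?_
    rw [mul_assoc]
    refine mul_le_mul_of_nonneg_left ?_ hC
    have : ((j:ℝ) + (s:ℝ)) + 1 ≤ ((s:ℝ)+1) * ((j:ℝ)+1) := by
      have hj : (0:ℝ) ≤ (j:ℝ) := Nat.cast_nonneg j
      have hs : (0:ℝ) ≤ (s:ℝ) := Nat.cast_nonneg s
      nlinarith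
    calc ((j:ℝ) + (s:ℝ) + 1)^K ≤ (((s:ℝ)+1) * ((j:ℝ)+1))^K := by
          refine pow_le_pow_left₀ (by positivity) ?_ _
          push_cast
          linarith [this]
      _ = ((s:ℝ)+1)^K * ((j:ℝ)+1)^K := mul_pow _ _ _
  have hReval : |R.eval x| ≤ C * ((s:ℝ)+1)^K * (∑' j : ℕ, ((j:ℝ)+1)^K * x^j) := by
    rw [Polynomial.eval_eq_sum_range]
    calc |∑ i ∈ Finset.range (R.natDegree + 1), R.coeff i * x ^ i|
        ≤ ∑ i ∈ Finset.range (R.natDegree + 1), |R.coeff i * x ^ i| :=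
          Finset.abs_sum_le_sum_abs _ _
      _ ≤ ∑ i ∈ Finset.range (R.natDegree + 1), C * ((s:ℝ)+1)^K * (((i:ℝ)+1)^K * x^i) := by
          refine Finset.sum_le_sum fun i _ => ?_
          rw [abs_mul, abs_pow, abs_of_pos hx0]
          calc |R.coeff i| * x^i ≤ (C * ((s:ℝ)+1)^K * ((i:ℝ)+1)^K) * x^i :=
                mul_le_mul_of_nonneg_right (hRcoeff i) (by positivity)
            _ = C * ((s:ℝ)+1)^K * (((i:ℝ)+1)^K * x^i) := by ring
      _ = C * ((s:ℝ)+1)^K * (∑ i ∈ Finset.range (R.natDegree + 1), ((i:ℝ)+1)^K * x^i) := by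
          rw [Finset.mul_sum]
      _ ≤ C * ((s:ℝ)+1)^K * (∑' j : ℕ, ((j:ℝ)+1)^K * x^j) := by
          refine mul_le_mul_of_nonneg_left ?_ (by positivity)
          exact Summable.sum_le_tsum _ (fun i _ => by positivity) (summable_aux K hx0 hx)
  calc |((Polynomial.X:ℝ[X])^s * R).eval x| = x^s * |R.eval x| := by
        rw [Polynomial.eval_mul, Polynomial.eval_pow, Polynomial.eval_X, abs_mul, abs_pow,
          abs_of_pos hx0]
    _ ≤ x^s * (C * ((s:ℝ)+1)^K * (∑' j : ℕ, ((j:ℝ)+1)^K * x^j)) :=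
        mul_le_mul_of_nonneg_left hReval (by positivity)
    _ = C * ((s:ℝ)+1)^K * x^s * (∑' j : ℕ, ((j:ℝ)+1)^K * x^j) := by ring

lemma tendsto_eval_zero (P : ℕ → ℝ[X]) {C : ℝ} {K : ℕ} (hC : 0 ≤ C)
    (hcoeff : ∀ n j, |(P n).coeff j| ≤ C * ((j:ℝ)+1)^K)
    (hdvd : ∀ n, (Polynomial.X : ℝ[X])^(2*n-1) ∣ P n) {x : ℝ} (hx0 : 0 < x) (hx : x < 1) :
    Tendsto (fun n => (P n).eval x) atTop (nhds 0) := by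
  set S := (∑' j : ℕ, ((j:ℝ)+1)^K * x^j) with hS
  have hSnn : 0 ≤ S := tsum_nonneg fun j => by positivity
  have hbound : ∀ n, ‖(P n).eval x‖ ≤ (C * S) * (((2*n-1 : ℕ):ℝ)+1)^K * x^(2*n-1) := by
    intro n
    rw [Real.norm_eq_abs]
    have := eval_small hC (hcoeff n) (hdvd n) hx0 hx
    calc |(P n).eval x| ≤ C * (((2*n-1 : ℕ):ℝ)+1)^K * x^(2*n-1) * S := this
      _ = (C * S) * (((2*n-1 : ℕ):ℝ)+1)^K * x^(2*n-1) := by ring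
  have hv : Tendsto (fun s : ℕ => ((s:ℝ)+1)^K * x^s) atTop (nhds 0) :=
    (summable_aux K hx0 hx).tendsto_atTop_zero
  have hcomp : Tendsto (fun n : ℕ => (((2*n-1 : ℕ):ℝ)+1)^K * x^(2*n-1)) atTop (nhds 0) := by
    refine hv.comp ?_
    exact tendsto_atTop_mono (fun n => by simp only [id_eq]; omega) tendsto_id
  have hfull : Tendsto (fun n : ℕ => (C * S) * ((((2*n-1 : ℕ):ℝ)+1)^K * x^(2*n-1))) atTop (nhds 0) := by
    simpa using hcomp.const_mul (C * S)
  refine squeeze_zero_norm hbound ?_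
  refine hfull.congr fun n => by ring

end Stmt15Aux

namespace Stmt15Aux
open Polynomial Filter Set

lemma factor_pos {R Q : Polynomial ℝ} {T : ℝ} (d : ℕ)
    (hQ : R = Polynomial.X ^ d * Q)
    (hpos : ∀ x ∈ Set.Ioc (0:ℝ) T, 0 < R.eval x) :
    ∀ x ∈ Set.Ioc (0:ℝ) T, 0 < Q.eval x := by
  intro x hx
  have h := hpos x hx
  rw [hQ, Polynomial.eval_mul, Polynomial.eval_pow, Polynomial.eval_X] at h
  have hxd : 0 < x ^ d := pow_pos hx.1 d
  nlinarith

lemma coeff_nonneg_of_pos (R : Polynomial ℝ) {T : ℝ} (hT : 0 < T) (d : ℕ)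
    (hlow : ∀ j, j < d → R.coeff j = 0) (hpos : ∀ x ∈ Set.Ioc (0:ℝ) T, 0 < R.eval x) :
    0 ≤ R.coeff d := by
  obtain ⟨Q, hQ⟩ := (Polynomial.X_pow_dvd_iff (n := d)).2 hlow
  have hcd : R.coeff d = Q.eval 0 := by
    rw [hQ]
    have := Polynomial.coeff_X_pow_mul Q d 0
    simp only [zero_add] at this
    rw [this, ← Polynomial.coeff_zero_eq_eval_zero]
  have hQpos := factor_pos d hQ hpos
  rw [hcd]
  have hne : (nhdsWithin (0:ℝ) (Set.Ioc 0 T)).NeBot := by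
    rw [← mem_closure_iff_nhdsWithin_neBot, closure_Ioc hT.ne]
    exact ⟨le_rfl, hT.le⟩
  have htend : Filter.Tendsto (fun x => Q.eval x) (nhdsWithin (0:ℝ) (Set.Ioc 0 T))
      (nhds (Q.eval 0)) :=
    (Polynomial.continuous Q).continuousAt.continuousWithinAt
  refine ge_of_tendsto htend ?_
  exact eventually_nhdsWithin_of_forall fun x hx => (hQpos x hx).le

lemma pos_near_zero (P : Polynomial ℝ) (d : ℕ)
    (hlow : ∀ j, j < d → P.coeff j = 0) (hd : 0 < P.coeff d) :
    ∃ δ > (0:ℝ), ∀ x : ℝ, 0 < x → x ≤ δ → 0 < P.eval x := by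
  obtain ⟨Q, hQ⟩ := (Polynomial.X_pow_dvd_iff (n := d)).2 hlow
  have hcd : P.coeff d = Q.eval 0 := by
    rw [hQ]
    have := Polynomial.coeff_X_pow_mul Q d 0
    simp only [zero_add] at this
    rw [this, ← Polynomial.coeff_zero_eq_eval_zero]
  rw [hcd] at hd
  have hev : ∀ᶠ y in nhds (0:ℝ), 0 < Q.eval y :=
    (Polynomial.continuous Q).continuousAt.eventually (eventually_gt_nhds hd)
  obtain ⟨ε, hε, hball⟩ := Metric.eventually_nhds_iff.1 hev
  refine ⟨ε/2, by linarith, fun x hx1 hx2 => ?_⟩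
  have hQx : 0 < Q.eval x := by
    refine hball ?_
    rw [Real.dist_eq, sub_zero, abs_of_pos hx1]
    linarith
  rw [hQ, Polynomial.eval_mul, Polynomial.eval_pow, Polynomial.eval_X]
  exact mul_pos (pow_pos hx1 d) hQx

end Stmt15Aux

namespace Stmt15Aux
open Polynomial Filter Set

section Main

variable {T : ℝ} {t : ℕ} {fplus fminus : MvPolynomial (Option (Fin t)) ℝ}
  {trans : Fin t → ℝ → ℝ} {nth : Fin t → ℕ} (E : ∀ k, RegExpand (trans k) T (nth k))

/-- real-valued substitution vectors -/
noncomputable def vecW (trans : Fin t → ℝ → ℝ) (x : ℝ) : Option (Fin t) → ℝ :=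
  fun o => Option.elim o x (fun k => trans k x)

noncomputable def vecT (E : ∀ k, RegExpand (trans k) T (nth k)) (N : Fin t → ℕ) (x : ℝ) :
    Option (Fin t) → ℝ :=
  fun o => Option.elim o x (fun k => (taylorPoly (E k).a (E k).m (N k)).eval x)

lemma tmin_eval (n : ℕ) (x : ℝ) :
    (Tmin fplus fminus (fun k => (E k).a) (fun k => (E k).m) n).eval x
      = MvPolynomial.eval (vecT E (fun _ => 2*n) x) fplus
        + MvPolynomial.eval (vecT E (fun _ => 2*n-1) x) fminus := by
  rw [Tmin, Polynomial.eval_add, polyeval_aeval, polyeval_aeval]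
  congr 1
  · exact congrArg (fun v => MvPolynomial.eval v fplus)
      (funext fun o => by cases o <;> simp [vecT])
  · exact congrArg (fun v => MvPolynomial.eval v fminus)
      (funext fun o => by cases o <;> simp [vecT])

lemma tmax_eval (n : ℕ) (x : ℝ) :
    (Tmax fplus fminus (fun k => (E k).a) (fun k => (E k).m) n).eval x
      = MvPolynomial.eval (vecT E (fun _ => 2*n-1) x) fplus
        + MvPolynomial.eval (vecT E (fun _ => 2*n) x) fminus := by
  rw [Tmax, Polynomial.eval_add, polyeval_aeval, polyeval_aeval]
  congr 1
  · exact congrArg (fun v => MvPolynomial.eval v fplus)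
      (funext fun o => by cases o <;> simp [vecT])
  · exact congrArg (fun v => MvPolynomial.eval v fminus)
      (funext fun o => by cases o <;> simp [vecT])

lemma mv_eval_ge_neg {σ : Type*} (f : MvPolynomial σ ℝ) (hf : ∀ d, f.coeff d ≤ 0)
    (p q : σ → ℝ) (hp : ∀ o, 0 ≤ p o) (hpq : ∀ o, p o ≤ q o) :
    MvPolynomial.eval q f ≤ MvPolynomial.eval p f := by
  have h := mv_eval_le (-f) (fun d => by simpa using neg_nonneg.2 (hf d)) p q hp hpq
  rw [map_neg, map_neg] at h
  linarith

variable (hk : ∀ k, 1 ≤ nth k)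

section withhk
include E hk

-- basic vector facts
lemma vecT_nonneg {x : ℝ} (hx : x ∈ Set.Ioc (0:ℝ) T) (N : Fin t → ℕ)
    (hN : ∀ k, nth k ≤ N k) : ∀ o, 0 ≤ vecT E N x o := by
  intro o
  cases o with
  | none => exact hx.1.le
  | some k => exact ((E k).taylor_pos (N k) (hN k) x hx).le

lemma vecW_nonneg {x : ℝ} (hx : x ∈ Set.Ioc (0:ℝ) T) : ∀ o, 0 ≤ vecW trans x o := by
  intro o
  cases o with
  | none => exact hx.1.le
  | some k => exact ((E k).g_pos x hx).le

lemma vecT_lo_le_W {x : ℝ} (hx : x ∈ Set.Ioc (0:ℝ) T) {n : ℕ} (hn : ∀ k, nth k ≤ n) :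
    ∀ o, vecT E (fun _ => 2*n) x o ≤ vecW trans x o := by
  intro o
  cases o with
  | none => exact le_rfl
  | some k => exact sandwich_lo (E k) hx (hn k)

lemma vecW_le_T_hi {x : ℝ} (hx : x ∈ Set.Ioc (0:ℝ) T) {n : ℕ} (hn : ∀ k, nth k ≤ n) :
    ∀ o, vecW trans x o ≤ vecT E (fun _ => 2*n-1) x o := by
  intro o
  cases o with
  | none => exact le_rfl
  | some k => exact sandwich_hi (E k) hx (hn k) (le_trans (hk k) (hn k))

end withhk

end Main
end Stmt15Aux

namespace Stmt15Aux
open Polynomial Filter Set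

section Main2

variable {T : ℝ} {t : ℕ} {fplus fminus : MvPolynomial (Option (Fin t)) ℝ}
  {trans : Fin t → ℝ → ℝ} {nth : Fin t → ℕ} (E : ∀ k, RegExpand (trans k) T (nth k))
  (hk : ∀ k, 1 ≤ nth k)
  (hp : ∀ d, 0 ≤ fplus.coeff d) (hm : ∀ d, fminus.coeff d ≤ 0)

include E hk hp hm

lemma tmin_le (n : ℕ) (hn : Finset.univ.sup nth ≤ n) {x : ℝ} (hx : x ∈ Set.Ioc (0:ℝ) T) :
    (Tmin fplus fminus (fun k => (E k).a) (fun k => (E k).m) n).eval x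
      ≤ MvPolynomial.eval (vecW trans x) fplus + MvPolynomial.eval (vecW trans x) fminus := by
  have hnk : ∀ k, nth k ≤ n := fun k => le_trans (Finset.le_sup (Finset.mem_univ k)) hn
  rw [tmin_eval]
  gcongr
  · exact mv_eval_le fplus hp _ _ (vecT_nonneg E hk hx _ (fun k => by have := hnk k; show nth k ≤ 2*n; omega))
      (vecT_lo_le_W E hk hx hnk)
  · exact mv_eval_ge_neg fminus hm _ _ (vecW_nonneg E hk hx) (vecW_le_T_hi E hk hx hnk)

lemma tmax_ge (n : ℕ) (hn : Finset.univ.sup nth ≤ n) {x : ℝ} (hx : x ∈ Set.Ioc (0:ℝ) T) :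
    MvPolynomial.eval (vecW trans x) fplus + MvPolynomial.eval (vecW trans x) fminus
      ≤ (Tmax fplus fminus (fun k => (E k).a) (fun k => (E k).m) n).eval x := by
  have hnk : ∀ k, nth k ≤ n := fun k => le_trans (Finset.le_sup (Finset.mem_univ k)) hn
  rw [tmax_eval]
  gcongr
  · exact mv_eval_le fplus hp _ _ (vecW_nonneg E hk hx) (vecW_le_T_hi E hk hx hnk)
  · exact mv_eval_ge_neg fminus hm _ _
      (vecT_nonneg E hk hx _ (fun k => by have := hnk k; show nth k ≤ 2*n; omega))
      (vecT_lo_le_W E hk hx hnk)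

lemma tmin_mono_step (n : ℕ) (hn : Finset.univ.sup nth ≤ n) {x : ℝ} (hx : x ∈ Set.Ioc (0:ℝ) T) :
    (Tmin fplus fminus (fun k => (E k).a) (fun k => (E k).m) n).eval x
      ≤ (Tmin fplus fminus (fun k => (E k).a) (fun k => (E k).m) (n+1)).eval x := by
  have hnk : ∀ k, nth k ≤ n := fun k => le_trans (Finset.le_sup (Finset.mem_univ k)) hn
  rw [tmin_eval, tmin_eval]
  gcongr
  · refine mv_eval_le fplus hp _ _ (vecT_nonneg E hk hx _ (fun k => by have := hnk k; show nth k ≤ 2*n; omega)) ?_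
    intro o
    cases o with
    | none => exact le_rfl
    | some k =>
        have h2 : 2*(n+1) = 2*n + 2 := by ring
        rw [h2]
        exact even_step (E k) hx (by show nth k ≤ 2*n + 1; have := hnk k; omega) ⟨n, by ring⟩
  · refine mv_eval_ge_neg fminus hm _ _
      (vecT_nonneg E hk hx _ (fun k => by have := hk k; have := hnk k; show nth k ≤ 2*(n+1)-1; omega)) ?_
    intro o
    cases o with
    | none => exact le_rfl
    | some k =>
        have hn1 : 1 ≤ n := le_trans (hk k) (hnk k)
        have h2 : 2*(n+1) - 1 = (2*n-1) + 2 := by omega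
        rw [h2]
        exact odd_step (E k) hx (by show nth k ≤ (2*n-1) + 1; have := hnk k; omega) ⟨n-1, by omega⟩

lemma tmin_mono (n n' : ℕ) (hn : Finset.univ.sup nth ≤ n) (hnn' : n ≤ n')
    {x : ℝ} (hx : x ∈ Set.Ioc (0:ℝ) T) :
    (Tmin fplus fminus (fun k => (E k).a) (fun k => (E k).m) n).eval x
      ≤ (Tmin fplus fminus (fun k => (E k).a) (fun k => (E k).m) n').eval x := by
  induction n' , hnn' using Nat.le_induction with
  | base => exact le_rfl
  | succ n' hnn' ih =>
      exact le_trans ih (tmin_mono_step E hk hp hm n' (le_trans hn hnn') hx)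

omit hp hm in
lemma tmin_tendsto (n0 : ℕ) {x : ℝ} (hx : x ∈ Set.Ioc (0:ℝ) T) :
    Filter.Tendsto
      (fun n => (Tmin fplus fminus (fun k => (E k).a) (fun k => (E k).m) n).eval x)
      Filter.atTop
      (nhds (MvPolynomial.eval (vecW trans x) fplus + MvPolynomial.eval (vecW trans x) fminus)) := by
  have hxI : x ∈ Set.Icc (0:ℝ) T := Set.Ioc_subset_Icc_self hx
  have h1 : Tendsto (fun n => MvPolynomial.eval (vecT E (fun _ => 2*n) x) fplus) atTop
      (nhds (MvPolynomial.eval (vecW trans x) fplus)) := by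
    refine tendsto_mv_eval fplus _ _ (fun o => ?_)
    cases o with
    | none => simpa [vecT, vecW] using tendsto_const_nhds
    | some k =>
        simp only [vecT, vecW, Option.elim]
        refine ((E k).converges x hxI).comp ?_
        exact tendsto_atTop_mono (fun n => by simp only [id_eq]; omega) tendsto_id
  have h2 : Tendsto (fun n => MvPolynomial.eval (vecT E (fun _ => 2*n-1) x) fminus) atTop
      (nhds (MvPolynomial.eval (vecW trans x) fminus)) := by
    refine tendsto_mv_eval fminus _ _ (fun o => ?_)
    cases o with
    | none => simpa [vecT, vecW] using tendsto_const_nhds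
    | some k =>
        simp only [vecT, vecW, Option.elim]
        refine ((E k).converges x hxI).comp ?_
        exact tendsto_atTop_mono (fun n => by simp only [id_eq]; omega) tendsto_id
  have := h1.add h2
  refine this.congr fun n => ?_
  rw [tmin_eval]

end Main2
end Stmt15Aux

namespace Stmt15Aux
open Polynomial Filter Set

section Main3

variable {T : ℝ} {t : ℕ} {fplus fminus : MvPolynomial (Option (Fin t)) ℝ}
  {trans : Fin t → ℝ → ℝ} {nth : Fin t → ℕ} (E : ∀ k, RegExpand (trans k) T (nth k))

include E

lemma subst_bnd (N : Fin t → ℕ) :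
    ∀ o : Option (Fin t),
      Bnd 0 ((fun o => Option.elim o Polynomial.X
        (fun k => taylorPoly ((fun k => (E k).a) k) ((fun k => (E k).m) k) (N k))) o) := by
  intro o
  cases o with
  | none => exact bnd_X
  | some k => exact bnd_taylor (E k).a_pos (E k).a_le_one (E k).m_mono (N k)

lemma tmin_coeff_bound :
    ∃ C : ℝ, ∃ K : ℕ, 0 ≤ C ∧ ∀ n j,
      |(Tmin fplus fminus (fun k => (E k).a) (fun k => (E k).m) n).coeff j|
        ≤ C * ((j:ℝ)+1)^K := by
  classical
  set Cp := ∑ d ∈ fplus.support, |fplus.coeff d| with hCp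
  set Cm := ∑ d ∈ fminus.support, |fminus.coeff d| with hCm
  set Kp := fplus.support.sup (fun d => ∑ o ∈ d.support, (d o + 1)) with hKp
  set Km := fminus.support.sup (fun d => ∑ o ∈ d.support, (d o + 1)) with hKm
  have hCp0 : 0 ≤ Cp := Finset.sum_nonneg fun d _ => abs_nonneg _
  have hCm0 : 0 ≤ Cm := Finset.sum_nonneg fun d _ => abs_nonneg _
  refine ⟨Cp + Cm, max Kp Km, by positivity, fun n j => ?_⟩
  have hj1 : (1:ℝ) ≤ (j:ℝ) + 1 := by
    have : (0:ℝ) ≤ (j:ℝ) := Nat.cast_nonneg j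
    linarith
  rw [Tmin, Polynomial.coeff_add]
  refine (abs_add_le _ _).trans ?_
  refine le_trans (add_le_add (bnd_aeval fplus _ (subst_bnd E _) j)
    (bnd_aeval fminus _ (subst_bnd E _) j)) ?_
  have e1 : ((j:ℝ)+1)^Kp ≤ ((j:ℝ)+1)^(max Kp Km) := pow_le_pow_right₀ hj1 (le_max_left _ _)
  have e2 : ((j:ℝ)+1)^Km ≤ ((j:ℝ)+1)^(max Kp Km) := pow_le_pow_right₀ hj1 (le_max_right _ _)
  rw [add_mul]
  exact add_le_add (mul_le_mul_of_nonneg_left e1 hCp0) (mul_le_mul_of_nonneg_left e2 hCm0)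

lemma tmin_coeff_stab {n n' j : ℕ} (h : j < 2*n-1) (h' : j < 2*n'-1) :
    (Tmin fplus fminus (fun k => (E k).a) (fun k => (E k).m) n).coeff j
      = (Tmin fplus fminus (fun k => (E k).a) (fun k => (E k).m) n').coeff j := by
  have hdvd : (Polynomial.X : ℝ[X])^(j+1)
      ∣ Tmin fplus fminus (fun k => (E k).a) (fun k => (E k).m) n
        - Tmin fplus fminus (fun k => (E k).a) (fun k => (E k).m) n' := by
    rw [Tmin, Tmin]
    have e1 := aeval_sub_dvd
      (fun o => Option.elim o Polynomial.X
        (fun k => taylorPoly ((fun k => (E k).a) k) ((fun k => (E k).m) k) (2*n)))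
      (fun o => Option.elim o Polynomial.X
        (fun k => taylorPoly ((fun k => (E k).a) k) ((fun k => (E k).m) k) (2*n')))
      (s := j+1) (fun o => by
        cases o with
        | none => simp
        | some k => exact taylor_sub_dvd (E k).m_mono _ (by omega) (by omega)) fplus
    have e2 := aeval_sub_dvd
      (fun o => Option.elim o Polynomial.X
        (fun k => taylorPoly ((fun k => (E k).a) k) ((fun k => (E k).m) k) (2*n-1)))
      (fun o => Option.elim o Polynomial.X
        (fun k => taylorPoly ((fun k => (E k).a) k) ((fun k => (E k).m) k) (2*n'-1)))
      (s := j+1) (fun o => by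
        cases o with
        | none => simp
        | some k => exact taylor_sub_dvd (E k).m_mono _ (by omega) (by omega)) fminus
    have := dvd_add e1 e2
    convert this using 1
    ring
  have h0 := (Polynomial.X_pow_dvd_iff.1 hdvd) j (by omega)
  rw [Polynomial.coeff_sub, sub_eq_zero] at h0
  exact h0

lemma tmin_tmax_coeff {n j : ℕ} (h : j < 2*n-1) :
    (Tmin fplus fminus (fun k => (E k).a) (fun k => (E k).m) n).coeff j
      = (Tmax fplus fminus (fun k => (E k).a) (fun k => (E k).m) n).coeff j := by
  have hdvd : (Polynomial.X : ℝ[X])^(j+1)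
      ∣ Tmin fplus fminus (fun k => (E k).a) (fun k => (E k).m) n
        - Tmax fplus fminus (fun k => (E k).a) (fun k => (E k).m) n := by
    rw [Tmin, Tmax]
    have e1 := aeval_sub_dvd
      (fun o => Option.elim o Polynomial.X
        (fun k => taylorPoly ((fun k => (E k).a) k) ((fun k => (E k).m) k) (2*n)))
      (fun o => Option.elim o Polynomial.X
        (fun k => taylorPoly ((fun k => (E k).a) k) ((fun k => (E k).m) k) (2*n-1)))
      (s := j+1) (fun o => by
        cases o with
        | none => simp
        | some k => exact taylor_sub_dvd (E k).m_mono _ (by omega) (by omega)) fplus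
    have e2 := aeval_sub_dvd
      (fun o => Option.elim o Polynomial.X
        (fun k => taylorPoly ((fun k => (E k).a) k) ((fun k => (E k).m) k) (2*n-1)))
      (fun o => Option.elim o Polynomial.X
        (fun k => taylorPoly ((fun k => (E k).a) k) ((fun k => (E k).m) k) (2*n)))
      (s := j+1) (fun o => by
        cases o with
        | none => simp
        | some k => exact taylor_sub_dvd (E k).m_mono _ (by omega) (by omega)) fminus
    have := dvd_add e1 e2
    convert this using 1
    ring
  have h0 := (Polynomial.X_pow_dvd_iff.1 hdvd) j (by omega)
  rw [Polynomial.coeff_sub, sub_eq_zero] at h0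
  exact h0

end Main3
end Stmt15Aux

namespace Stmt15Aux
open Polynomial Filter Set

section Main4

variable {T : ℝ} {t : ℕ} {fplus fminus : MvPolynomial (Option (Fin t)) ℝ}
  {trans : Fin t → ℝ → ℝ} {nth : Fin t → ℕ}

lemma forward_case (E : ∀ k, RegExpand (trans k) T (nth k)) (hk : ∀ k, 1 ≤ nth k)
    (hp : ∀ d, 0 ≤ fplus.coeff d) (hm : ∀ d, fminus.coeff d ≤ 0) (hT : 0 < T)
    (hFpos : ∀ x ∈ Set.Ioc (0:ℝ) T,
      0 < MvPolynomial.eval (vecW trans x) fplus + MvPolynomial.eval (vecW trans x) fminus) :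
    ∃ n, Finset.univ.sup nth ≤ n ∧ ∀ x ∈ Set.Ioc (0:ℝ) T,
      0 < (Tmin fplus fminus (fun k => (E k).a) (fun k => (E k).m) n).eval x := by
  classical
  obtain ⟨C, K, hC0, hcb⟩ := tmin_coeff_bound E (fplus := fplus) (fminus := fminus)
  set Φ : ℕ → ℝ :=
    fun j => (Tmin fplus fminus (fun k => (E k).a) (fun k => (E k).m) (j+1)).coeff j with hΦ
  have hstab : ∀ n j, j < 2*n-1 →
      (Tmin fplus fminus (fun k => (E k).a) (fun k => (E k).m) n).coeff j = Φ j :=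
    fun n j hj => tmin_coeff_stab E hj (by omega)
  by_cases hall : ∀ j, Φ j = 0
  · exfalso
    have hx0pos : (0:ℝ) < min T (1/2) := lt_min hT (by norm_num)
    have hx0 : min T (1/2) ∈ Set.Ioc (0:ℝ) T := ⟨hx0pos, min_le_left _ _⟩
    have hx0lt1 : min T (1/2) < 1 := lt_of_le_of_lt (min_le_right _ _) (by norm_num)
    have hdvd : ∀ n, (Polynomial.X : Polynomial ℝ)^(2*n-1)
        ∣ Tmin fplus fminus (fun k => (E k).a) (fun k => (E k).m) n :=
      fun n => Polynomial.X_pow_dvd_iff.2 fun j hj => (hstab n j hj).trans (hall j)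
    have h0 := tendsto_eval_zero
      (fun n => Tmin fplus fminus (fun k => (E k).a) (fun k => (E k).m) n)
      hC0 hcb hdvd hx0pos hx0lt1
    have hFt := tmin_tendsto (fplus := fplus) (fminus := fminus) E hk 0 hx0
    have heq := tendsto_nhds_unique h0 hFt
    have := hFpos _ hx0
    linarith [heq ▸ this]
  · push_neg at hall
    set d := Nat.find hall with hd
    have hdne : Φ d ≠ 0 := Nat.find_spec hall
    have hmin : ∀ j, j < d → Φ j = 0 := fun j hj => by
      have := Nat.find_min hall hj
      simpa using this
    set n1 := max (Finset.univ.sup nth) (d+1) with hn1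
    have hn1sup : Finset.univ.sup nth ≤ n1 := le_max_left _ _
    have hdlt : d < 2*n1 - 1 := by
      have := le_max_right (Finset.univ.sup nth) (d+1)
      omega
    have hlowP : ∀ j, j < d →
        (Tmin fplus fminus (fun k => (E k).a) (fun k => (E k).m) n1).coeff j = 0 :=
      fun j hj => (hstab n1 j (by omega)).trans (hmin j hj)
    have hQpos : ∀ x ∈ Set.Ioc (0:ℝ) T,
        0 < (Tmax fplus fminus (fun k => (E k).a) (fun k => (E k).m) n1).eval x := by
      intro x hx
      have h1 := tmax_ge E hk hp hm n1 hn1sup hx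
      have h2 := hFpos x hx
      linarith
    have hlowQ : ∀ j, j < d →
        (Tmax fplus fminus (fun k => (E k).a) (fun k => (E k).m) n1).coeff j = 0 :=
      fun j hj => by
        rw [← tmin_tmax_coeff E (by omega : j < 2*n1-1)]
        exact hlowP j hj
    have hQd : (Tmax fplus fminus (fun k => (E k).a) (fun k => (E k).m) n1).coeff d = Φ d := by
      rw [← tmin_tmax_coeff E hdlt]
      exact hstab n1 d hdlt
    have h0le := coeff_nonneg_of_pos _ hT d hlowQ hQpos
    rw [hQd] at h0le
    have hΦdpos : 0 < Φ d := lt_of_le_of_ne h0le (Ne.symm hdne)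
    have hPd : (Tmin fplus fminus (fun k => (E k).a) (fun k => (E k).m) n1).coeff d = Φ d :=
      hstab n1 d hdlt
    obtain ⟨δ, hδ0, hδ⟩ := pos_near_zero
      (Tmin fplus fminus (fun k => (E k).a) (fun k => (E k).m) n1) d hlowP
      (by rw [hPd]; exact hΦdpos)
    by_cases hTδ : T ≤ δ
    · exact ⟨n1, hn1sup, fun x hx => hδ x hx.1 (le_trans hx.2 hTδ)⟩
    · push_neg at hTδ
      have hexn : ∀ x ∈ Set.Icc δ T, ∃ n, n1 ≤ n ∧
          0 < (Tmin fplus fminus (fun k => (E k).a) (fun k => (E k).m) n).eval x := by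
        intro x hx
        have hxI : x ∈ Set.Ioc (0:ℝ) T := ⟨lt_of_lt_of_le hδ0 hx.1, hx.2⟩
        have htd := tmin_tendsto (fplus := fplus) (fminus := fminus) E hk 0 hxI
        have hFx := hFpos x hxI
        have hev : ∀ᶠ n in Filter.atTop,
            0 < (Tmin fplus fminus (fun k => (E k).a) (fun k => (E k).m) n).eval x :=
          htd.eventually (eventually_gt_nhds hFx)
        obtain ⟨n, hn⟩ := (hev.and (Filter.eventually_ge_atTop n1)).exists
        exact ⟨n, hn.2, hn.1⟩
      choose! nf hnf1 hnfpos using hexn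
      obtain ⟨s, hsK, hcover⟩ := isCompact_Icc.elim_nhds_subcover
        (fun y => {z : ℝ | 0 < (Tmin fplus fminus (fun k => (E k).a) (fun k => (E k).m) (nf y)).eval z})
        (fun y hy => (isOpen_lt continuous_const (Polynomial.continuous _)).mem_nhds (hnfpos y hy))
      refine ⟨max n1 (s.sup nf), le_trans hn1sup (le_max_left _ _), fun x hx => ?_⟩
      rcases le_or_gt x δ with hxd | hxd
      · have h1 := hδ x hx.1 hxd
        have h2 := tmin_mono E hk hp hm n1 (max n1 (s.sup nf)) hn1sup (le_max_left _ _) hx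
        linarith
      · have hxK : x ∈ Set.Icc δ T := ⟨hxd.le, hx.2⟩
        have hmem := hcover hxK
        rw [Set.mem_iUnion₂] at hmem
        obtain ⟨y, hy, hxy⟩ := hmem
        have hyK : y ∈ Set.Icc δ T := hsK y hy
        have h1 : 0 < (Tmin fplus fminus (fun k => (E k).a) (fun k => (E k).m) (nf y)).eval x := hxy
        have hle : nf y ≤ max n1 (s.sup nf) := le_trans (Finset.le_sup hy) (le_max_right _ _)
        have h2 := tmin_mono E hk hp hm (nf y) (max n1 (s.sup nf))
          (le_trans hn1sup (hnf1 y hyK)) hle hx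
        linarith

end Main4
end Stmt15Aux



/-- with the Taylor-substitution setup, `F > 0` on `(0,T]` iff for some
`n ≥ n* = max(n₁,…,n_t)`, the lower limit polynomial `Tmin(n,F)` is positive on `(0,T]`. -/
theorem stmt_15 (T : ℝ) (hT : 0 < T) (t : ℕ)
    (f fplus fminus : MvPolynomial (Option (Fin t)) ℝ)
    (hplus : ∀ mo : Option (Fin t) →₀ ℕ,
      MvPolynomial.coeff mo fplus =
        if 0 < MvPolynomial.coeff mo f then MvPolynomial.coeff mo f else 0)
    (hminus : ∀ mo : Option (Fin t) →₀ ℕ,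
      MvPolynomial.coeff mo fminus =
        if MvPolynomial.coeff mo f < 0 then MvPolynomial.coeff mo f else 0)
    (trans : Fin t → ℝ → ℝ) (nth : Fin t → ℕ)
    (E : ∀ k, RegExpand (trans k) T (nth k))
    (F : ℝ → ℝ)
    (hF : ∀ x : ℝ, F x =
      MvPolynomial.eval (fun o => Option.elim o x (fun k => trans k x)) f) :
    (∀ x ∈ Set.Ioc (0 : ℝ) T, 0 < F x) ↔
      ∃ n, Finset.univ.sup nth ≤ n ∧
        ∀ x ∈ Set.Ioc (0 : ℝ) T,
          0 < (Tmin fplus fminus (fun k => (E k).a) (fun k => (E k).m) n).eval x := by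
  classical
  by_cases hk : ∀ k : Fin t, 1 ≤ nth k
  swap
  · push_neg at hk
    obtain ⟨k, hk0⟩ := hk
    exact absurd (Stmt15Aux.one_le_threshold (E k) hT) (by omega)
  have hp : ∀ d, 0 ≤ fplus.coeff d := fun d => by
    rw [hplus d]
    split_ifs with h
    · exact h.le
    · exact le_rfl
  have hm : ∀ d, fminus.coeff d ≤ 0 := fun d => by
    rw [hminus d]
    split_ifs with h
    · exact h.le
    · exact le_rfl
  have hfsum : fplus + fminus = f := by
    ext d
    rw [MvPolynomial.coeff_add, hplus d, hminus d]
    rcases lt_trichotomy (MvPolynomial.coeff d f) 0 with h | h | h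
    · rw [if_neg (by linarith), if_pos h]
      ring
    · rw [if_neg (by rw [h]; exact lt_irrefl 0), if_neg (by rw [h]; exact lt_irrefl 0), h]
      ring
    · rw [if_pos h, if_neg (by linarith)]
      ring
  have hFval : ∀ x : ℝ, F x = MvPolynomial.eval (Stmt15Aux.vecW trans x) fplus
      + MvPolynomial.eval (Stmt15Aux.vecW trans x) fminus := by
    intro x
    rw [hF x, ← hfsum, map_add]
    rfl
  constructor
  · intro hFpos
    refine Stmt15Aux.forward_case E hk hp hm hT (fun x hx => ?_)
    have := hFpos x hx
    rw [hFval x] at this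
    exact this
  · rintro ⟨n, hn, hpos⟩ x hx
    have h1 := Stmt15Aux.tmin_le E hk hp hm n hn hx
    rw [hFval x]
    exact lt_of_lt_of_le (hpos x hx) h1
end
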